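/- arXiv:2302.12038 — 9 statements merged into one kernel-verified Lean document; each statement's English description precedes it below -/
import Mathlib

section
/- If φ : V × V → W is a symmetric bilinear map between finite-dimensional real vector spaces, then the set RE*(φ) = {X ∈ RE(φ) : φ(X,X) ≠ 0} is open and dense in V, provided φ is nonzero. -/
open Module Submodule

set_option linter.unusedSectionVars false

lemma exists_small_nonroot (p : Polynomial ℝ) (hp : p ≠ 0) {δ : ℝ} (hδ : 0 < δ) :
    ∃ t : ℝ, 0 < t ∧ t < δ ∧ p.eval t ≠ 0 := by
  have h1 : (Set.Ioo (0:ℝ) δ).Infinite := Set.infinite_coe_iff.mp (Set.Ioo.infinite hδ)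
  have h2 := Polynomial.finite_setOf_isRoot hp
  obtain ⟨t, ht⟩ := (h1.diff h2).nonempty
  exact ⟨t, ht.1.1, ht.1.2, ht.2⟩

section aux

variable {W : Type*} [AddCommGroup W] [Module ℝ W] [FiniteDimensional ℝ W]

lemma aux_indep_iff {k : ℕ} (w : Fin k → W) :
    LinearIndependent ℝ w ↔
      ∃ f : Fin k → (W →ₗ[ℝ] ℝ), (Matrix.of fun i j => f i (w j)).det ≠ 0 := by
  constructor
  · intro h
    let b := Basis.span h
    choose f hf using fun i => LinearMap.exists_extend (V' := ℝ) (b.coord i)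
    refine ⟨f, ?_⟩
    have he : (Matrix.of fun i j => f i (w j)) = (1 : Matrix (Fin k) (Fin k) ℝ) := by
      ext i j
      have hw : w j = (Submodule.span ℝ (Set.range w)).subtype (b j) := by
        simp [b, Basis.span_apply]
      rw [Matrix.of_apply, hw, ← LinearMap.comp_apply, hf i]
      simp [b, Basis.coord_apply, Basis.repr_self, Matrix.one_apply,
        Finsupp.single_apply, eq_comm]
    rw [he, Matrix.det_one]
    exact one_ne_zero
  · rintro ⟨f, hdet⟩
    rw [Fintype.linearIndependent_iff]
    intro g hg i
    have hmv : (Matrix.of fun i j => f i (w j)).mulVec g = 0 := by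
      funext i
      simp only [Matrix.mulVec, dotProduct, Matrix.of_apply]
      have : ∑ j, f i (w j) * g j = f i (∑ j, g j • w j) := by
        rw [map_sum]; congr 1; funext j; rw [map_smul]; simp [mul_comm]
      rw [this, hg, map_zero]; rfl
    have := Matrix.eq_zero_of_mulVec_eq_zero hdet hmv
    exact congrFun this i

variable {V : Type*} [AddCommGroup V] [Module ℝ V]

lemma aux_rank_iff (ψ : V →ₗ[ℝ] W) (k : ℕ) :
    k ≤ finrank ℝ (LinearMap.range ψ) ↔
      ∃ Y : Fin k → V, ∃ f : Fin k → (W →ₗ[ℝ] ℝ),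
        (Matrix.of fun i j => f i (ψ (Y j))).det ≠ 0 := by
  constructor
  · intro h
    obtain ⟨g, hg⟩ := exists_linearIndependent_of_le_finrank h
    choose Y hY using fun i => LinearMap.mem_range.mp (g i).2
    have hind : LinearIndependent ℝ (fun i => ψ (Y i)) := by
      have := hg.map' (LinearMap.range ψ).subtype (Submodule.ker_subtype _)
      convert this using 1
      funext i; simp [hY i]
      rfl
    obtain ⟨f, hf⟩ := (aux_indep_iff _).mp hind
    exact ⟨Y, f, hf⟩
  · rintro ⟨Y, f, hdet⟩
    have hind : LinearIndependent ℝ (fun i => ψ (Y i)) :=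
      (aux_indep_iff _).mpr ⟨f, hdet⟩
    have hind' : LinearIndependent ℝ
        (fun i => (⟨ψ (Y i), LinearMap.mem_range_self ψ (Y i)⟩ :
          LinearMap.range ψ)) := by
      apply LinearIndependent.of_comp (LinearMap.range ψ).subtype
      convert hind using 1
      rfl
    simpa using hind'.fintype_card_le_finrank

end aux

/-- For a nonzero symmetric bilinear map `φ : V × V → W`, the set
`RE*(φ) = {X ∈ RE(φ) : φ(X,X) ≠ 0}` is open and dense in `V`. -/
theorem stmt_1 {V W : Type*}
    [NormedAddCommGroup V] [NormedSpace ℝ V] [FiniteDimensional ℝ V]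
    [AddCommGroup W] [Module ℝ W] [FiniteDimensional ℝ W]
    (φ : V →ₗ[ℝ] V →ₗ[ℝ] W)
    (hsymm : ∀ X Y : V, φ X Y = φ Y X)
    (hne : φ ≠ 0) :
    IsOpen {X : V | (∀ Y : V,
        finrank ℝ (LinearMap.range (φ Y)) ≤ finrank ℝ (LinearMap.range (φ X))) ∧
        φ X X ≠ 0} ∧
    Dense {X : V | (∀ Y : V,
        finrank ℝ (LinearMap.range (φ Y)) ≤ finrank ℝ (LinearMap.range (φ X))) ∧
        φ X X ≠ 0} := by
  classical
  set r : V → ℕ := fun X => finrank ℝ (LinearMap.range (φ X)) with hr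
  -- the maximum rank is attained
  have hbdd : BddAbove (Set.range r) := by
    refine ⟨finrank ℝ W, ?_⟩
    rintro n ⟨X, rfl⟩
    exact Submodule.finrank_le _
  obtain ⟨X₀, hX₀⟩ : ∃ X₀, r X₀ = sSup (Set.range r) :=
    Nat.sSup_mem (Set.range_nonempty r) hbdd
  set κ : ℕ := r X₀ with hκ
  have hmax : ∀ Y, r Y ≤ κ := fun Y => hX₀ ▸ le_csSup hbdd ⟨Y, rfl⟩
  -- rewrite the set
  have hset : {X : V | (∀ Y : V, r Y ≤ r X) ∧ φ X X ≠ 0}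
      = {X : V | κ ≤ r X} ∩ {X : V | φ X X ≠ 0} := by
    ext X
    simp only [Set.mem_setOf_eq, Set.mem_inter_iff]
    exact ⟨fun h => ⟨h.1 X₀, h.2⟩, fun h => ⟨fun Y => (hmax Y).trans h.1, h.2⟩⟩
  rw [show {X : V | (∀ Y : V,
        finrank ℝ (LinearMap.range (φ Y)) ≤ finrank ℝ (LinearMap.range (φ X))) ∧
        φ X X ≠ 0} = {X : V | κ ≤ r X} ∩ {X : V | φ X X ≠ 0} from hset]
  -- openness of the rank set
  have hopen1 : IsOpen {X : V | κ ≤ r X} := by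
    have heq : {X : V | κ ≤ r X} = ⋃ (Y : Fin κ → V) (f : Fin κ → (W →ₗ[ℝ] ℝ)),
        {X : V | (Matrix.of fun i j => f i (φ X (Y j))).det ≠ 0} := by
      ext X
      simp only [Set.mem_setOf_eq, Set.mem_iUnion, hr, aux_rank_iff (φ X) κ]
    rw [heq]
    refine isOpen_iUnion fun Y => isOpen_iUnion fun f => ?_
    have hc : Continuous fun X : V =>
        (Matrix.of fun i j => f i (φ X (Y j))).det := by
      apply Continuous.matrix_det
      apply continuous_matrix
      intro i j
      exact ((f i).comp (φ.flip (Y j))).continuous_of_finiteDimensional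
    exact IsOpen.preimage hc isOpen_ne
  -- openness of the second set
  have hopen2 : IsOpen {X : V | φ X X ≠ 0} := by
    have heq : {X : V | φ X X ≠ 0} = ⋃ (g : W →ₗ[ℝ] ℝ), {X : V | g (φ X X) ≠ 0} := by
      ext X
      simp only [Set.mem_setOf_eq, Set.mem_iUnion]
      rw [← not_forall, not_iff_not]
      exact (Module.forall_dual_apply_eq_zero_iff ℝ (φ X X)).symm
    rw [heq]
    refine isOpen_iUnion fun g => ?_
    have hF : Continuous fun X : V =>
        (LinearMap.toContinuousLinearMap ((φ.compr₂ g) X)) := by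
      exact (LinearMap.toContinuousLinearMap.toLinearMap.comp
        (φ.compr₂ g)).continuous_of_finiteDimensional
    have hc : Continuous fun X : V => g (φ X X) := by
      have := hF.clm_apply continuous_id
      convert this using 1
      rfl
    exact IsOpen.preimage hc isOpen_ne
  -- density of the rank set
  have hdense1 : Dense {X : V | κ ≤ r X} := by
    rw [Metric.dense_iff]
    intro x ε hε
    obtain ⟨Y, f, hdet⟩ := (aux_rank_iff (φ X₀) κ).mp (le_of_eq hκ)
    set Z := X₀ - x with hZ
    set P : Polynomial ℝ := (Matrix.of fun i j : Fin κ =>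
        Polynomial.C (f i (φ x (Y j))) +
        Polynomial.C (f i (φ Z (Y j))) * Polynomial.X).det with hP
    have hPeval : ∀ t : ℝ, P.eval t =
        (Matrix.of fun i j => f i (φ (x + t • Z) (Y j))).det := by
      intro t
      have := RingHom.map_det (Polynomial.evalRingHom t) (Matrix.of fun i j : Fin κ =>
        Polynomial.C (f i (φ x (Y j))) +
        Polynomial.C (f i (φ Z (Y j))) * Polynomial.X)
      rw [Polynomial.coe_evalRingHom] at this
      rw [hP, this]
      congr 1
      ext i j
      rw [RingHom.mapMatrix_apply, Matrix.map_apply, Matrix.of_apply, Matrix.of_apply]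
      simp only [Polynomial.coe_evalRingHom, Polynomial.eval_add, Polynomial.eval_mul,
        Polynomial.eval_C, Polynomial.eval_X]
      rw [map_add φ, map_smul φ, LinearMap.add_apply, LinearMap.smul_apply,
        map_add (f i), map_smul (f i), smul_eq_mul]
      ring
    have hP1 : P.eval 1 ≠ 0 := by
      rw [hPeval 1]
      have : x + (1:ℝ) • Z = X₀ := by simp [hZ]
      rw [this]; exact hdet
    have hPne : P ≠ 0 := fun h => hP1 (by simp [h])
    have hδ : 0 < ε / (‖Z‖ + 1) := by positivity
    obtain ⟨t, ht0, htδ, htne⟩ := exists_small_nonroot P hPne hδ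
    refine ⟨x + t • Z, ?_, ?_⟩
    · rw [Metric.mem_ball, dist_eq_norm]
      have : ‖x + t • Z - x‖ = t * ‖Z‖ := by
        simp [norm_smul, abs_of_pos ht0]
      rw [this]
      calc t * ‖Z‖ ≤ t * (‖Z‖ + 1) := by nlinarith [norm_nonneg Z]
        _ < ε / (‖Z‖ + 1) * (‖Z‖ + 1) := by
            have h1 : (0:ℝ) < ‖Z‖ + 1 := by positivity
            exact mul_lt_mul_of_pos_right htδ h1
        _ = ε := by field_simp
    · show κ ≤ r (x + t • Z)
      rw [hr, aux_rank_iff]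
      exact ⟨Y, f, by rw [← hPeval t]; exact htne⟩
  -- density of the second set
  have hdense2 : Dense {X : V | φ X X ≠ 0} := by
    -- find Z with φ Z Z ≠ 0
    obtain ⟨A, hA⟩ : ∃ A, φ A ≠ 0 := by
      by_contra h
      push_neg at h
      exact hne (LinearMap.ext fun X => by rw [h X]; rfl)
    obtain ⟨B, hB⟩ : ∃ B, φ A B ≠ 0 := by
      by_contra h
      push_neg at h
      exact hA (LinearMap.ext fun X => by rw [h X]; rfl)
    obtain ⟨Z, hZZ⟩ : ∃ Z, φ Z Z ≠ 0 := by
      by_cases h1 : φ A A ≠ 0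
      · exact ⟨A, h1⟩
      by_cases h2 : φ B B ≠ 0
      · exact ⟨B, h2⟩
      push_neg at h1 h2
      refine ⟨A + B, ?_⟩
      have : φ (A + B) (A + B) = (2:ℝ) • φ A B := by
        simp only [map_add, LinearMap.add_apply, h1, h2, hsymm B A]
        rw [two_smul]; abel
      rw [this]
      exact smul_ne_zero two_ne_zero hB
    obtain ⟨g, hg⟩ : ∃ g : W →ₗ[ℝ] ℝ, g (φ Z Z) ≠ 0 := by
      by_contra h
      push_neg at h
      exact hZZ ((Module.forall_dual_apply_eq_zero_iff ℝ (φ Z Z)).mp h)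
    rw [Metric.dense_iff]
    intro x ε hε
    set P : Polynomial ℝ := Polynomial.C (g (φ x x)) +
        Polynomial.C (g (φ x Z) + g (φ Z x)) * Polynomial.X +
        Polynomial.C (g (φ Z Z)) * Polynomial.X ^ 2 with hP
    have hPne : P ≠ 0 := by
      intro h
      have : P.coeff 2 = 0 := by rw [h]; simp
      rw [hP] at this
      simp [Polynomial.coeff_add, Polynomial.coeff_C,
        Polynomial.coeff_C_mul, Polynomial.coeff_X, Polynomial.coeff_X_pow] at this
      exact hg this
    have hPeval : ∀ t : ℝ, P.eval t = g (φ (x + t • Z) (x + t • Z)) := by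
      intro t
      simp only [map_add, map_smul, LinearMap.add_apply, LinearMap.smul_apply,
        smul_eq_mul, hP]
      simp [Polynomial.eval_add, Polynomial.eval_mul, Polynomial.eval_pow]
      ring
    have hδ : 0 < ε / (‖Z‖ + 1) := by positivity
    obtain ⟨t, ht0, htδ, htne⟩ := exists_small_nonroot P hPne hδ
    refine ⟨x + t • Z, ?_, ?_⟩
    · rw [Metric.mem_ball, dist_eq_norm]
      have : ‖x + t • Z - x‖ = t * ‖Z‖ := by
        simp [norm_smul, abs_of_pos ht0]
      rw [this]
      calc t * ‖Z‖ ≤ t * (‖Z‖ + 1) := by nlinarith [norm_nonneg Z]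
        _ < ε / (‖Z‖ + 1) * (‖Z‖ + 1) := by
            have h1 : (0:ℝ) < ‖Z‖ + 1 := by positivity
            exact mul_lt_mul_of_pos_right htδ h1
        _ = ε := by field_simp
    · show φ (x + t • Z) (x + t • Z) ≠ 0
      intro h
      rw [hPeval t, h, map_zero] at htne
      exact htne rfl
  exact ⟨hopen1.inter hopen2, hdense1.inter_of_isOpen_left hdense2 hopen1⟩
end

section
/- For a bilinear map φ : V₁ × V₂ → W and any regular element X ∈ RE(φ), the subspace L(X) spanned by all φ(Y,Z) with Y ∈ V₁ and Z ∈ ker φ_X is contained in φ_X(V₂). -/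
open Module Submodule

section KeyLemma
open Polynomial Matrix

lemma key_lemma {V₂ W : Type*}
    [AddCommGroup V₂] [Module ℝ V₂] [FiniteDimensional ℝ V₂]
    [AddCommGroup W] [Module ℝ W] [FiniteDimensional ℝ W]
    (A B : V₂ →ₗ[ℝ] W)
    (hrank : ∀ t : ℝ, finrank ℝ (LinearMap.range (A + t • B)) ≤
      finrank ℝ (LinearMap.range A))
    (Z : V₂) (hZ : A Z = 0) : B Z ∈ LinearMap.range A := by
  classical
  obtain ⟨U, hU⟩ := (LinearMap.ker A).exists_isCompl
  set R : Submodule ℝ W := LinearMap.range A with hR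
  obtain ⟨Cc, hC⟩ := R.exists_isCompl
  set π : W →ₗ[ℝ] R := R.linearProjOfIsCompl Cc hC with hπ
  set ι : U →ₗ[ℝ] V₂ := U.subtype with hι
  set r : ℕ := finrank ℝ R with hr
  -- finrank U = r
  have hUr : finrank ℝ U = r := by
    rw [hr, hR]
    rw [← LinearEquiv.finrank_eq ((LinearMap.ker A).quotientEquivOfIsCompl U hU),
      LinearEquiv.finrank_eq A.quotKerEquivRange]
  let bU : Basis (Fin r) ℝ U := finBasisOfFinrankEq ℝ U hUr
  let bR : Basis (Fin r) ℝ R := finBasisOfFinrankEq ℝ R rfl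
  set g0 : U →ₗ[ℝ] R := π ∘ₗ A ∘ₗ ι with hg0
  set g1 : U →ₗ[ℝ] R := π ∘ₗ B ∘ₗ ι with hg1
  -- π is identity on range A
  have hπA : ∀ x : V₂, (π (A x) : W) = A x := fun x =>
    congrArg Subtype.val (Submodule.linearProjOfIsCompl_apply_left hC ⟨A x, ⟨x, rfl⟩⟩)
  -- g0 bijective
  have hg0inj : Function.Injective g0 := by
    intro u u' h
    rw [← sub_eq_zero, ← map_sub] at h
    set w := u - u' with hw
    have h1 : A (ι w) = 0 := by
      have := hπA (ι w)
      rw [show π (A (ι w)) = g0 w from rfl, h] at this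
      simpa using this.symm
    have h2 : (w : V₂) ∈ (LinearMap.ker A) ⊓ U := ⟨h1, w.2⟩
    rw [hU.inf_eq_bot] at h2
    have hw0 : (w : V₂) = 0 := by simpa using h2
    have : w = 0 := Subtype.ext hw0
    rw [sub_eq_zero] at this; exact this
  have hg0surj : Function.Surjective g0 := by
    rintro ⟨y, x, rfl⟩
    have hx : x ∈ (LinearMap.ker A) ⊔ U := by rw [hU.sup_eq_top]; trivial
    obtain ⟨k, hk, u, hu, rfl⟩ := Submodule.mem_sup.mp hx
    refine ⟨⟨u, hu⟩, Subtype.ext ?_⟩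
    have : A (k + u) = A u := by
      simp [LinearMap.mem_ker.mp hk]
    show (g0 ⟨u, hu⟩ : W) = A (k + u)
    rw [this]; exact hπA u
  set M0 : Matrix (Fin r) (Fin r) ℝ := LinearMap.toMatrix bU bR g0 with hM0
  set M1 : Matrix (Fin r) (Fin r) ℝ := LinearMap.toMatrix bU bR g1 with hM1
  -- det M0 ≠ 0
  have hd0 : M0.det ≠ 0 := by
    let e := LinearEquiv.ofBijective g0 ⟨hg0inj, hg0surj⟩
    have h1 : LinearMap.toMatrix bR bU (e.symm : R →ₗ[ℝ] U) * M0 = 1 := by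
      rw [hM0, ← LinearMap.toMatrix_comp bU bR bU]
      have : (e.symm : R →ₗ[ℝ] U) ∘ₗ g0 = LinearMap.id := by
        ext u
        simp only [LinearMap.comp_apply, LinearMap.id_apply]
        exact congrArg Subtype.val (e.symm_apply_apply u)
      rw [this, LinearMap.toMatrix_id]
    intro h
    have := congrArg Matrix.det h1
    rw [Matrix.det_mul, h, mul_zero, Matrix.det_one] at this
    exact zero_ne_one this
  -- polynomial data
  set v : Fin r → ℝ := ⇑(bR.repr (π (B Z))) with hv
  set Mx : Matrix (Fin r) (Fin r) ℝ[X] :=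
    M0.map Polynomial.C + (X : ℝ[X]) • M1.map Polynomial.C with hMx
  set dx : ℝ[X] := Mx.det with hdx
  set ux : Fin r → ℝ[X] := Mx.adjugate *ᵥ (fun i => Polynomial.C (v i)) with hux
  have hMxmap : ∀ t : ℝ, Mx.map (eval t) = M0 + t • M1 := by
    intro t
    ext i j
    simp only [hMx, Matrix.map_apply, Matrix.add_apply, Matrix.smul_apply, eval_add, smul_eq_mul,
      eval_mul, eval_C, eval_X]
    try ring
  have hdxeval : ∀ t : ℝ, eval t dx = (M0 + t • M1).det := by
    intro t
    have h := (evalRingHom t).map_det Mx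
    simp only [RingHom.mapMatrix_apply, coe_evalRingHom] at h
    rw [hdx, h, hMxmap t]
  have huxeval : ∀ (t : ℝ) (j : Fin r),
      eval t (ux j) = ((M0 + t • M1).adjugate *ᵥ v) j := by
    intro t j
    rw [hux]
    simp only [Matrix.mulVec, dotProduct, eval_finset_sum, eval_mul]
    congr 1
    ext k
    have h := (evalRingHom t).map_adjugate Mx
    simp only [RingHom.mapMatrix_apply, coe_evalRingHom] at h
    rw [show eval t (Mx.adjugate j k) = (Mx.adjugate.map (eval t)) j k from rfl, h, hMxmap t]
    simp
  have hdx0 : eval 0 dx = M0.det := by rw [hdxeval 0]; simp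
  -- the infinite set S
  have hdxne : dx ≠ 0 := fun h => hd0 (by rw [← hdx0, h, eval_zero])
  set S : Set ℝ := {t : ℝ | t ≠ 0 ∧ eval t dx ≠ 0} with hS
  have hSinf : S.Infinite := by
    have : Sᶜ ⊆ {t : ℝ | IsRoot dx t} ∪ {0} := by
      intro t ht
      simp only [hS, Set.mem_compl_iff, Set.mem_setOf_eq, not_and_or, not_not] at ht
      rcases ht with h | h
      · right; simpa using h
      · left; exact h
    have hfin : (Sᶜ : Set ℝ).Finite :=
      Set.Finite.subset ((Polynomial.finite_setOf_isRoot hdxne).union (Set.finite_singleton 0)) this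
    have := Set.Finite.infinite_compl hfin
    simpa using this
  -- key evaluation: for t ∈ S and any functional f, q f vanishes at t
  set q : Module.Dual ℝ W → ℝ[X] := fun f =>
    dx * Polynomial.C (f (B Z)) - ∑ j, ux j *
      (Polynomial.C (f (A (ι (bU j)))) + (X : ℝ[X]) * Polynomial.C (f (B (ι (bU j))))) with hq
  have hqeval : ∀ t ∈ S, ∀ f : Module.Dual ℝ W, eval t (q f) = 0 := by
    intro t ht f
    obtain ⟨ht0, htd⟩ := ht
    have hdet : (M0 + t • M1).det ≠ 0 := by rw [← hdxeval t]; exact htd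
    have hMt : LinearMap.toMatrix bU bR (g0 + t • g1) = M0 + t • M1 := by
      rw [_root_.map_add, _root_.map_smul, hM0, hM1]
    -- injectivity of (A + t • B) ∘ ι
    have hval : ∀ u : U, (g0 + t • g1) u = π ((A + t • B) (ι u)) := by
      intro u; simp [hg0, hg1]
    have hinj : Function.Injective ((A + t • B) ∘ₗ ι) := by
      rw [← LinearMap.ker_eq_bot]
      rw [Submodule.eq_bot_iff]
      intro u hu
      have h0 : (g0 + t • g1) u = 0 := by
        rw [hval u, show (A + t • B) (ι u) = 0 from hu, _root_.map_zero]
      have hrepr : (M0 + t • M1) *ᵥ (bU.repr u) = 0 := by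
        rw [← hMt, LinearMap.toMatrix_mulVec_repr, h0]
        simp
      have : (bU.repr u : Fin r → ℝ) = 0 := by
        have h2 := congrArg (fun w => (M0 + t • M1)⁻¹ *ᵥ w) hrepr
        simpa [Matrix.mulVec_mulVec, Matrix.nonsing_inv_mul _ (isUnit_iff_ne_zero.mpr hdet),
          Matrix.one_mulVec, Matrix.mulVec_zero] using h2
      have := bU.repr.map_eq_zero_iff.mp (by ext j; exact congrFun this j)
      exact this
    have hfr : finrank ℝ (LinearMap.range ((A + t • B) ∘ₗ ι)) = r :=
      (LinearMap.finrank_range_of_inj hinj).trans hUr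
    have hle : LinearMap.range ((A + t • B) ∘ₗ ι) ≤ LinearMap.range (A + t • B) :=
      LinearMap.range_comp_le_range ι (A + t • B)
    have heq : LinearMap.range ((A + t • B) ∘ₗ ι) = LinearMap.range (A + t • B) :=
      Submodule.eq_of_le_of_finrank_le hle (by rw [hfr]; exact hrank t)
    have hBZmem : B Z ∈ LinearMap.range ((A + t • B) ∘ₗ ι) := by
      rw [heq]
      have h1 : (A + t • B) Z = t • B Z := by simp [hZ]
      have h2 : t • B Z ∈ LinearMap.range (A + t • B) := ⟨Z, h1⟩
      have := Submodule.smul_mem _ t⁻¹ h2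
      rwa [smul_smul, inv_mul_cancel₀ ht0, one_smul] at this
    obtain ⟨u, hu⟩ := hBZmem
    have hu' : (A + t • B) (ι u) = B Z := hu
    -- coordinates
    have hcoord : (M0 + t • M1) *ᵥ (bU.repr u) = v := by
      rw [← hMt, LinearMap.toMatrix_mulVec_repr, hval u, hv, hu']
    have hut : ∀ j, eval t (ux j) = (M0 + t • M1).det * bU.repr u j := by
      intro j
      rw [huxeval t j, ← hcoord, Matrix.mulVec_mulVec, Matrix.adjugate_mul,
        Matrix.smul_mulVec, Matrix.one_mulVec]
      simp
    -- final computation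
    have hsum : (A + t • B) (ι u) = ∑ j, bU.repr u j • (A + t • B) (ι (bU j)) := by
      conv_lhs => rw [← bU.sum_repr u]
      simp only [_root_.map_sum, _root_.map_smul]
    have hfBZ : f (B Z) = ∑ j, bU.repr u j * f ((A + t • B) (ι (bU j))) := by
      rw [← hu', hsum, _root_.map_sum]
      simp only [_root_.map_smul, smul_eq_mul]
    have hterm : ∀ j : Fin r, eval t (ux j) *
        (f (A (ι (bU j))) + t * f (B (ι (bU j)))) =
        (M0 + t • M1).det * (bU.repr u j * f ((A + t • B) (ι (bU j)))) := by
      intro j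
      rw [hut j]
      have hf : f ((A + t • B) (ι (bU j))) = f (A (ι (bU j))) + t * f (B (ι (bU j))) := by
        simp
      rw [hf]; ring
    rw [hq]
    simp only [eval_sub, eval_mul, eval_finset_sum, eval_add, eval_C, eval_X]
    rw [hdxeval t, Finset.sum_congr rfl (fun j _ => hterm j), ← Finset.mul_sum, ← hfBZ,
      sub_self]
  -- conclude q f = 0 for all f, evaluate at 0
  have hq0 : ∀ f : Module.Dual ℝ W, q f = 0 := by
    intro f
    apply Polynomial.eq_zero_of_infinite_isRoot
    apply Set.Infinite.mono _ hSinf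
    intro t ht
    exact hqeval t ht f
  set u0 : Fin r → ℝ := M0.adjugate *ᵥ v with hu0
  have hfinal : ∀ f : Module.Dual ℝ W,
      f (M0.det • B Z - A (ι (∑ j, u0 j • bU j))) = 0 := by
    intro f
    have h := congrArg (eval 0) (hq0 f)
    rw [hq] at h
    simp only [eval_sub, eval_mul, eval_finset_sum, eval_add, eval_C, eval_X, eval_zero,
      zero_mul, add_zero, mul_zero] at h
    rw [hdx0] at h
    have hux0 : ∀ j, eval 0 (ux j) = u0 j := by
      intro j; rw [huxeval 0 j, hu0]; simp
    rw [Finset.sum_congr rfl (fun j _ => by rw [hux0 j])] at h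
    have hAsum : A (ι (∑ j, u0 j • bU j)) = ∑ j, u0 j • A (ι (bU j)) := by
      simp only [_root_.map_sum, _root_.map_smul]
    rw [_root_.map_sub, _root_.map_smul, hAsum, _root_.map_sum]
    simp only [_root_.map_smul, smul_eq_mul]
    exact h
  have : M0.det • B Z - A (ι (∑ j, u0 j • bU j)) = 0 := by
    rw [← Module.forall_dual_apply_eq_zero_iff ℝ]
    exact hfinal
  rw [sub_eq_zero] at this
  refine ⟨M0.det⁻¹ • ι (∑ j, u0 j • bU j), ?_⟩
  rw [_root_.map_smul, ← this, smul_smul, inv_mul_cancel₀ hd0, one_smul]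

end KeyLemma

/-- For a bilinear map `φ : V₁ × V₂ → W` and a regular element `X`, the subspace
`L(X)` spanned by all `φ(Y,Z)` with `Y ∈ V₁`, `Z ∈ ker φ_X` is contained in
`φ_X(V₂)`. -/
theorem stmt_2 {V₁ V₂ W : Type*}
    [AddCommGroup V₁] [Module ℝ V₁] [FiniteDimensional ℝ V₁]
    [AddCommGroup V₂] [Module ℝ V₂] [FiniteDimensional ℝ V₂]
    [AddCommGroup W] [Module ℝ W] [FiniteDimensional ℝ W]
    (φ : V₁ →ₗ[ℝ] V₂ →ₗ[ℝ] W) (X : V₁)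
    (hX : ∀ Y : V₁,
      finrank ℝ (LinearMap.range (φ Y)) ≤ finrank ℝ (LinearMap.range (φ X))) :
    span ℝ {w : W | ∃ Y : V₁, ∃ Z ∈ LinearMap.ker (φ X), w = φ Y Z} ≤
      LinearMap.range (φ X) := by
  rw [span_le]
  rintro w ⟨Y, Z, hZ, rfl⟩
  refine key_lemma (φ X) (φ Y) ?_ Z hZ
  intro t
  have : φ X + t • φ Y = φ (X + t • Y) := by
    rw [_root_.map_add, _root_.map_smul]
  rw [this]
  exact hX (X + t • Y)
end

section
/- If φ : V₁ × V₂ → W is a flat bilinear map with respect to an inner product ⟪·,·⟫ on W (possibly indefinite), then for any regular element X of φ, the subspace L(X) = span{φ(Y,Z) : Y ∈ V₁, Z ∈ ker φ_X} is contained in U(X) = φ_X(V₂) ∩ φ_X(V₂)^⊥. -/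
open Module Submodule Filter Matrix

lemma key_mem {V₁ V₂ W : Type*}
    [AddCommGroup V₁] [Module ℝ V₁]
    [AddCommGroup V₂] [Module ℝ V₂]
    [AddCommGroup W] [Module ℝ W] [FiniteDimensional ℝ W]
    (φ : V₁ →ₗ[ℝ] V₂ →ₗ[ℝ] W) (X : V₁)
    (hX : ∀ Y : V₁, finrank ℝ (LinearMap.range (φ Y)) ≤ finrank ℝ (LinearMap.range (φ X)))
    (Y : V₁) (Z : V₂) (hZ : φ X Z = 0) :
    φ Y Z ∈ LinearMap.range (φ X) := by
  by_contra hmem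
  set U := LinearMap.range (φ X) with hU
  set k := finrank ℝ U with hk
  let b : Basis (Fin k) ℝ U := finBasis ℝ U
  -- choose preimages of basis vectors
  have hpre : ∀ j : Fin k, ∃ z : V₂, φ X z = (b j : W) := fun j => (b j).2
  choose e he using hpre
  -- families
  set u : Fin (k + 1) → W := Fin.cons (φ Y Z) (fun j => (b j : W)) with hu
  set v : Fin (k + 1) → V₂ := Fin.cons Z e with hv
  -- u is linearly independent
  have hspan : Submodule.span ℝ (Set.range fun j => ((b j : W))) = U := by
    have : (Set.range fun j => ((b j : W))) = U.subtype '' Set.range b := by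
      rw [← Set.range_comp]; rfl
    rw [this, ← Submodule.map_span, b.span_eq, Submodule.map_subtype_top]
  have hu_indep : LinearIndependent ℝ u := by
    rw [hu, linearIndependent_fin_cons]
    refine ⟨b.linearIndependent.map' U.subtype (Submodule.ker_subtype U), ?_⟩
    rw [hspan]; exact hmem
  -- dual functionals
  set S := Submodule.span ℝ (Set.range u) with hS
  obtain ⟨T, hT⟩ := Submodule.exists_isCompl S
  let bS : Basis (Fin (k + 1)) ℝ S := Basis.span hu_indep
  let f : Fin (k + 1) → (W →ₗ[ℝ] ℝ) :=
    fun i => (bS.coord i).comp (S.projectionOnto T hT)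
  have hf : ∀ i j, f i (u j) = if j = i then 1 else 0 := by
    intro i j
    have h1 : u j = ((bS j : S) : W) := by rw [Basis.span_apply]
    have h2 : (S.projectionOnto T hT) (u j) = bS j := by
      rw [h1, Submodule.projectionOnto_apply_left]
    show (bS.coord i) ((S.projectionOnto T hT) (u j)) = _
    rw [h2, Basis.coord_apply, bS.repr_self, Finsupp.single_apply]
  -- matrix family
  set N : ℝ → Matrix (Fin (k + 1)) (Fin (k + 1)) ℝ :=
    fun t => Matrix.of fun i j =>
      if j = 0 then f i (φ Y Z) else f i (φ X (v j)) + t * f i (φ Y (v j)) with hN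
  set M : ℝ → Matrix (Fin (k + 1)) (Fin (k + 1)) ℝ :=
    fun t => Matrix.of fun i j => f i (φ (X + t • Y) (v j)) with hM
  -- det M t = 0 for all t
  have hdetM : ∀ t : ℝ, (M t).det = 0 := by
    intro t
    rw [← Matrix.exists_mulVec_eq_zero_iff]
    set R := LinearMap.range (φ (X + t • Y)) with hR
    have hw : ∀ j, φ (X + t • Y) (v j) ∈ R := fun j => LinearMap.mem_range_self _ _
    set wv : Fin (k + 1) → R := fun j => ⟨φ (X + t • Y) (v j), hw j⟩ with hwv
    have hdep : ¬ LinearIndependent ℝ wv := by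
      intro hli
      have := hli.fintype_card_le_finrank
      simp only [Fintype.card_fin] at this
      have h2 := hX (X + t • Y)
      rw [← hR] at h2
      omega
    rw [Fintype.not_linearIndependent_iff] at hdep
    obtain ⟨g, hg0, i0, hi0⟩ := hdep
    refine ⟨g, ?_, ?_⟩
    · intro h; exact hi0 (by rw [h]; rfl)
    · funext i
      have : (∑ j, g j • φ (X + t • Y) (v j)) = 0 := by
        have := congrArg (Subtype.val) hg0
        simpa [hwv] using this
      have : f i (∑ j, g j • φ (X + t • Y) (v j)) = 0 := by rw [this, map_zero]
      rw [map_sum] at this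
      simp only [LinearMap.map_smul, smul_eq_mul] at this
      show ∑ j, M t i j * g j = 0
      rw [← this]
      refine Finset.sum_congr rfl fun j _ => ?_
      rw [mul_comm]
      rfl
  -- det M t = t * det N t
  have hMN : ∀ t : ℝ, (M t).det = t * (N t).det := by
    intro t
    have heq : (M t)ᵀ = Matrix.updateRow ((N t)ᵀ) 0 (t • ((N t)ᵀ 0)) := by
      ext r c
      by_cases hr : r = 0
      · subst hr
        rw [Matrix.updateRow_self]
        show f c (φ (X + t • Y) (v 0)) = (t • ((N t)ᵀ 0)) c
        have hv0 : v 0 = Z := by rw [hv]; rfl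
        have : φ (X + t • Y) (v 0) = t • φ Y Z := by
          rw [hv0]; simp [map_add, LinearMap.map_smul, hZ]
        rw [this, _root_.map_smul]
        simp [hN, Matrix.transpose_apply]
      · rw [Matrix.updateRow_ne hr]
        show f c (φ (X + t • Y) (v r)) = N t c r
        have : φ (X + t • Y) (v r) = φ X (v r) + t • φ Y (v r) := by
          simp [map_add, LinearMap.map_smul]
        rw [this, map_add, _root_.map_smul]
        simp [hN, hr]
    calc (M t).det = (M t)ᵀ.det := (Matrix.det_transpose _).symm
      _ = (Matrix.updateRow ((N t)ᵀ) 0 (t • ((N t)ᵀ 0))).det := by rw [heq]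
      _ = t * (Matrix.updateRow ((N t)ᵀ) 0 ((N t)ᵀ 0)).det := Matrix.det_updateRow_smul _ _ _ _
      _ = t * ((N t)ᵀ).det := by rw [Matrix.updateRow_eq_self]
      _ = t * (N t).det := by rw [Matrix.det_transpose]
  have hdetN : ∀ t : ℝ, t ≠ 0 → (N t).det = 0 := by
    intro t ht
    have := hdetM t
    rw [hMN t] at this
    exact (mul_eq_zero.1 this).resolve_left ht
  -- N 0 is the identity
  have hN0 : (N 0).det = 1 := by
    have : N 0 = 1 := by
      ext i j
      by_cases hj : j = 0
      · subst hj
        show f i (φ Y Z) = (1 : Matrix _ _ ℝ) i 0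
        have : φ Y Z = u 0 := by rw [hu]; rfl
        rw [this, hf, Matrix.one_apply]
        simp [eq_comm]
      · obtain ⟨m, rfl⟩ := Fin.exists_succ_eq.2 hj
        show f i (φ X (v m.succ)) + 0 * f i (φ Y (v m.succ)) = (1 : Matrix _ _ ℝ) i m.succ
        have hvs : v m.succ = e m := by rw [hv]; exact Fin.cons_succ _ _ _
        have hus : φ X (v m.succ) = u m.succ := by
          rw [hvs, he]; simp [hu]
        rw [hus, hf, Matrix.one_apply]
        simp [eq_comm]
    rw [this, Matrix.det_one]
  -- continuity contradiction
  have hcont : Continuous fun t : ℝ => (N t).det := by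
    apply Continuous.matrix_det
    apply continuous_matrix
    intro i j
    by_cases hj : j = 0 <;> simp only [hN, Matrix.of_apply, hj, if_true, if_false] <;> fun_prop
  have h1 : Tendsto (fun t : ℝ => (N t).det) (nhdsWithin 0 {(0:ℝ)}ᶜ) (nhds ((N 0).det)) :=
    (hcont.tendsto 0).mono_left nhdsWithin_le_nhds
  have h2 : Tendsto (fun t : ℝ => (N t).det) (nhdsWithin 0 {(0:ℝ)}ᶜ) (nhds 0) := by
    apply Tendsto.congr' _ tendsto_const_nhds
    filter_upwards [self_mem_nhdsWithin] with t ht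
    exact (hdetN t ht).symm
  have := tendsto_nhds_unique h1 h2
  rw [hN0] at this
  exact one_ne_zero this

/-- If `φ : V₁ × V₂ → W` is flat with respect to a (possibly indefinite)
nondegenerate symmetric bilinear form on `W`, then for any regular element `X`,
`L(X) = span{φ(Y,Z) : Y ∈ V₁, Z ∈ ker φ_X}` is contained in
`U(X) = φ_X(V₂) ∩ φ_X(V₂)^⊥`. -/
theorem stmt_3 {V₁ V₂ W : Type*}
    [AddCommGroup V₁] [Module ℝ V₁] [FiniteDimensional ℝ V₁]
    [AddCommGroup V₂] [Module ℝ V₂] [FiniteDimensional ℝ V₂]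
    [AddCommGroup W] [Module ℝ W] [FiniteDimensional ℝ W]
    (B : W →ₗ[ℝ] W →ₗ[ℝ] ℝ)
    (hBsymm : ∀ v w : W, B v w = B w v)
    (hBnondeg : ∀ v : W, (∀ w : W, B v w = 0) → v = 0)
    (φ : V₁ →ₗ[ℝ] V₂ →ₗ[ℝ] W)
    (hflat : ∀ (X Z : V₁) (Y T : V₂), B (φ X Y) (φ Z T) = B (φ X T) (φ Z Y))
    (X : V₁)
    (hX : ∀ Y : V₁,
      finrank ℝ (LinearMap.range (φ Y)) ≤ finrank ℝ (LinearMap.range (φ X))) :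
    ∀ w ∈ span ℝ {w : W | ∃ Y : V₁, ∃ Z ∈ LinearMap.ker (φ X), w = φ Y Z},
      w ∈ LinearMap.range (φ X) ∧ ∀ v ∈ LinearMap.range (φ X), B v w = 0 := by
  intro w hw
  constructor
  · have hle : span ℝ {w : W | ∃ Y : V₁, ∃ Z ∈ LinearMap.ker (φ X), w = φ Y Z} ≤
        LinearMap.range (φ X) := by
      rw [Submodule.span_le]
      rintro _ ⟨Y, Z, hZ, rfl⟩
      exact key_mem φ X hX Y Z (LinearMap.mem_ker.1 hZ)
    exact hle hw
  · rintro v ⟨T, rfl⟩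
    induction hw using Submodule.span_induction with
    | mem x hx =>
        obtain ⟨Y', Z', hZ', rfl⟩ := hx
        rw [hflat X Y' T Z', LinearMap.mem_ker.1 hZ']
        simp
    | zero => simp
    | add x y _ _ hx hy => rw [map_add, hx, hy, add_zero]
    | smul c x _ hx => rw [LinearMap.map_smul, hx, smul_zero]
end

section
/- Let φ : V^{2n} × V^{2n} → W^{p,p} be a symmetric bilinear map satisfying Tφ(X,Y) = φ(X,JY) for all X,Y. Then 4·dim S(φ) ≤ κ(φ)(κ(φ)+2), where κ(φ) is the maximal rank of the linear maps φ_X. -/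
set_option linter.unusedSectionVars false

section Count
open Finset

lemma two_mul_card_le_pairs (m : ℕ) :
    2 * Fintype.card {p : Fin m × Fin m // p.1 ≤ p.2} = m * (m + 1) := by
  classical
  rw [Fintype.card_subtype]
  set s : Finset (Fin m × Fin m) := univ.filter fun p => p.1 ≤ p.2 with hs
  set t : Finset (Fin m × Fin m) := univ.filter fun p => p.2 ≤ p.1 with ht
  have hcard_eq : s.card = t.card := by
    apply Finset.card_bij (fun p _ => p.swap)
    · rintro ⟨a, b⟩ hab
      simp only [hs, ht, mem_filter, mem_univ, true_and] at hab ⊢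
      exact hab
    · exact fun p _ q _ h => Prod.swap_injective h
    · rintro ⟨a, b⟩ hab
      refine ⟨(b, a), ?_, rfl⟩
      simp only [hs, ht, mem_filter, mem_univ, true_and] at hab ⊢
      exact hab
  have hunion : s ∪ t = univ := by
    ext ⟨a, b⟩
    simp only [hs, ht, mem_union, mem_filter, mem_univ, true_and, iff_true]
    exact le_total a b
  have hinter : (s ∩ t).card = m := by
    have : s ∩ t = univ.filter fun p : Fin m × Fin m => p.1 = p.2 := by
      ext ⟨a, b⟩
      simp only [hs, ht, mem_inter, mem_filter, mem_univ, true_and]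
      constructor
      · rintro ⟨h1, h2⟩; exact le_antisymm h1 h2
      · rintro rfl; exact ⟨le_rfl, le_rfl⟩
    rw [this]
    have hbij : (univ.filter fun p : Fin m × Fin m => p.1 = p.2).card
        = (univ : Finset (Fin m)).card := by
      apply Finset.card_bij (fun p _ => p.1)
      · rintro ⟨a, b⟩ _; exact mem_univ _
      · rintro ⟨a, b⟩ hab ⟨c, d⟩ hcd h
        simp only [mem_filter, mem_univ, true_and] at hab hcd
        subst hab; subst hcd
        simp only at h
        subst h; rfl
      · intro a _
        exact ⟨(a, a), by simp, rfl⟩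
    rw [hbij, Finset.card_univ, Fintype.card_fin]
  have hsum := Finset.card_union_add_card_inter s t
  rw [hunion, hinter] at hsum
  have huniv : (univ : Finset (Fin m × Fin m)).card = m * m := by
    simp [Finset.card_univ]
  rw [huniv] at hsum
  have : m * (m + 1) = m * m + m := by ring
  omega

end Count

open Module Submodule Polynomial Set

/-- The map `T(ξ,η) = (η,−ξ)` on `W^{p,p} = U ⊕ U` as a linear map. -/
def Tmap (U : Type*) [AddCommGroup U] [Module ℝ U] :
    (U × U) →ₗ[ℝ] U × U :=
  (LinearMap.snd ℝ U U).prod (-(LinearMap.fst ℝ U U))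

section Aux

variable {W : Type*} [AddCommGroup W] [Module ℝ W] [FiniteDimensional ℝ W]

lemma exists_dual_family {r : ℕ} (v : Fin r → W) (hv : LinearIndependent ℝ v) :
    ∃ f : Fin r → (W →ₗ[ℝ] ℝ), ∀ i j, f i (v j) = if i = j then 1 else 0 := by
  set Msp := span ℝ (Set.range v)
  obtain ⟨q, hq⟩ := Submodule.exists_isCompl Msp
  let bas : Basis (Fin r) ℝ Msp := Basis.span hv
  let proj := Submodule.projectionOnto Msp q hq
  refine ⟨fun i => (bas.coord i).comp proj, fun i j => ?_⟩
  have hmem : v j ∈ Msp := subset_span (mem_range_self j)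
  have h1 : proj (v j) = ⟨v j, hmem⟩ := by
    have := Submodule.linearProjOfIsCompl_apply_left hq ⟨v j, hmem⟩
    simpa using this
  have h2 : (⟨v j, hmem⟩ : Msp) = bas j := by
    apply Subtype.ext
    simp [bas, Basis.span_apply hv j]
  simp only [LinearMap.comp_apply, h1, h2, Basis.coord_apply, Basis.repr_self]
  simp [Finsupp.single_apply, eq_comm]

lemma finite_bad_perturb {r : ℕ} (v w : Fin r → W) (hv : LinearIndependent ℝ v) :
    {t : ℝ | ¬ LinearIndependent ℝ (fun i => v i + t • w i)}.Finite := by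
  obtain ⟨f, hf⟩ := exists_dual_family v hv
  set P : Polynomial ℝ :=
    (Matrix.of fun i j : Fin r => C (f i (v j)) + X * C (f i (w j))).det with hP
  have heval : ∀ t : ℝ, P.eval t =
      (Matrix.of fun i j : Fin r => f i (v j + t • w j)).det := by
    intro t
    rw [hP]
    have h := RingHom.map_det (evalRingHom t) (Matrix.of fun i j : Fin r =>
        C (f i (v j)) + X * C (f i (w j)))
    simp only [coe_evalRingHom] at h
    rw [h]
    congr 1
    ext i j
    simp only [RingHom.mapMatrix_apply, Matrix.map_apply, Matrix.of_apply, eval_add, eval_mul,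
      eval_C, eval_X, map_add, map_smul, smul_eq_mul, coe_evalRingHom]
  have hP0 : P.eval 0 = 1 := by
    rw [heval]
    have : (Matrix.of fun i j : Fin r => f i (v j + (0:ℝ) • w j)) = 1 := by
      ext i j
      simp [Matrix.one_apply, hf]
    rw [this, Matrix.det_one]
  have hPne : P ≠ 0 := fun h => by simp [h] at hP0
  apply (Polynomial.finite_setOf_isRoot hPne).subset
  intro t ht
  simp only [Set.mem_setOf_eq] at ht ⊢
  by_contra hroot
  apply ht
  -- det ≠ 0 at t, so the family is independent
  have hdet : (Matrix.of fun i j : Fin r => f i (v j + t • w j)).det ≠ 0 := by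
    rw [← heval]; exact hroot
  rw [Fintype.linearIndependent_iff]
  intro g hg
  by_contra hgne
  push_neg at hgne
  obtain ⟨i0, hi0⟩ := hgne
  apply hdet
  rw [← Matrix.exists_mulVec_eq_zero_iff]
  refine ⟨g, fun h => hi0 (by rw [h]; rfl), ?_⟩
  ext i
  simp only [Matrix.mulVec, dotProduct, Matrix.of_apply, Pi.zero_apply]
  have : ∑ j, f i (v j + t • w j) * g j = f i (∑ j, g j • (v j + t • w j)) := by
    rw [map_sum]
    congr 1; ext j
    rw [map_smul, smul_eq_mul, mul_comm]
  rw [this, hg, map_zero]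

variable {V : Type*} [AddCommGroup V] [Module ℝ V] [FiniteDimensional ℝ V]

lemma exists_preimage_basis (ψ : V →ₗ[ℝ] W) :
    ∃ v : Fin (finrank ℝ (LinearMap.range ψ)) → V,
      LinearIndependent ℝ (fun j => ψ (v j)) ∧
      span ℝ (Set.range fun j => ψ (v j)) = LinearMap.range ψ := by
  set M := LinearMap.range ψ
  let b := finBasis ℝ M
  choose v hv using fun j => (LinearMap.mem_range.mp (b j).2)
  have hli : LinearIndependent ℝ (fun j => ψ (v j)) := by
    have : (fun j => ψ (v j)) = fun j => (M.subtype (b j)) := by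
      ext j; rw [hv j]; rfl
    rw [this]
    exact b.linearIndependent.map' M.subtype (Submodule.ker_subtype M)
  refine ⟨v, hli, ?_⟩
  have hle : span ℝ (Set.range fun j => ψ (v j)) ≤ M := by
    rw [span_le]
    rintro x ⟨j, rfl⟩
    exact LinearMap.mem_range_self ψ (v j)
  refine Submodule.eq_of_le_of_finrank_le hle ?_
  rw [finrank_span_eq_card hli]
  simp

lemma lemA (φ : V →ₗ[ℝ] V →ₗ[ℝ] W) {κ : ℕ} (X1 : V)
    (hmax : ∀ X, finrank ℝ (LinearMap.range (φ X)) ≤ κ)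
    (hreg : finrank ℝ (LinearMap.range (φ X1)) = κ)
    (Y Z : V) (hZ : φ X1 Z = 0) : φ Y Z ∈ LinearMap.range (φ X1) := by
  by_contra hout
  obtain ⟨v, hli, hsp⟩ := exists_preimage_basis (φ X1)
  set u : Fin (finrank ℝ (LinearMap.range (φ X1)) + 1) → W := Fin.snoc (fun j => φ X1 (v j)) (φ Y Z) with hu
  set wfam : Fin (finrank ℝ (LinearMap.range (φ X1)) + 1) → W := Fin.snoc (fun j => φ Y (v j)) 0 with hw
  have hu_li : LinearIndependent ℝ u := by
    rw [hu, linearIndependent_fin_snoc]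
    exact ⟨hli, by rw [hsp]; exact hout⟩
  have hfin := finite_bad_perturb u wfam hu_li
  obtain ⟨t, ht⟩ := ((hfin.union (Set.finite_singleton 0)).infinite_compl).nonempty
  simp only [Set.mem_compl_iff, Set.mem_union, Set.mem_singleton_iff, not_or,
    Set.mem_setOf_eq, not_not] at ht
  obtain ⟨hli', htne⟩ := ht
  -- all perturbed vectors lie in range of φ (X1 + t • Y)
  have hmem : ∀ i, u i + t • wfam i ∈ LinearMap.range (φ (X1 + t • Y)) := by
    intro i
    refine Fin.lastCases ?_ ?_ i
    · have h1 : u (Fin.last _) = φ Y Z := by rw [hu]; simp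
      have h2 : wfam (Fin.last _) = 0 := by rw [hw]; simp
      rw [h1, h2, smul_zero, add_zero]
      have : φ (X1 + t • Y) Z = t • φ Y Z := by
        simp [map_add, map_smul, hZ]
      have : φ Y Z = t⁻¹ • (φ (X1 + t • Y) Z) := by
        rw [this, smul_smul, inv_mul_cancel₀ htne, one_smul]
      rw [this]
      exact Submodule.smul_mem _ _ (LinearMap.mem_range_self _ _)
    · intro j
      have h1 : u (Fin.castSucc j) = φ X1 (v j) := by rw [hu]; simp
      have h2 : wfam (Fin.castSucc j) = φ Y (v j) := by rw [hw]; simp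
      rw [h1, h2]
      have : φ X1 (v j) + t • φ Y (v j) = φ (X1 + t • Y) (v j) := by
        simp [map_add, map_smul]
      rw [this]
      exact LinearMap.mem_range_self _ _
  have hspan : span ℝ (Set.range fun i => u i + t • wfam i) ≤
      LinearMap.range (φ (X1 + t • Y)) := by
    rw [span_le]; rintro x ⟨i, rfl⟩; exact hmem i
  have h1 : finrank ℝ (LinearMap.range (φ X1)) + 1 ≤ finrank ℝ (LinearMap.range (φ (X1 + t • Y))) := by
    have := Submodule.finrank_mono hspan
    rwa [finrank_span_eq_card hli', Fintype.card_fin] at this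
  rw [hreg] at h1
  exact absurd (le_trans h1 (hmax _)) (by omega)

lemma finrank_sup_span_singleton (D : Submodule ℝ V) {v : V} (hv : v ∉ D) :
    finrank ℝ (D ⊔ span ℝ {v} : Submodule ℝ V) = finrank ℝ D + 1 := by
  have hvne : v ≠ 0 := fun h => hv (h ▸ D.zero_mem)
  have h1 : finrank ℝ (span ℝ {v} : Submodule ℝ V) = 1 := finrank_span_singleton hvne
  have h2 : D ⊓ span ℝ {v} = ⊥ := by
    rw [eq_bot_iff]
    rintro x ⟨hxD, hxs⟩
    obtain ⟨a, rfl⟩ := Submodule.mem_span_singleton.mp hxs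
    rcases eq_or_ne a 0 with rfl | ha
    · simp
    · exact absurd (by simpa [smul_smul, inv_mul_cancel₀ ha] using D.smul_mem a⁻¹ hxD : v ∈ D) hv
  have := Submodule.finrank_sup_add_finrank_inf_eq D (span ℝ {v})
  rw [h2] at this
  simp only [finrank_bot, add_zero] at this
  omega

lemma J_not_mem_aux (J : V →ₗ[ℝ] V) (hJ : ∀ v, J (J v) = -v)
    (D : Submodule ℝ V) (hD : ∀ x ∈ D, J x ∈ D) {v : V} (hv : v ∉ D) :
    J v ∉ D ⊔ span ℝ {v} := by
  intro hmem
  rw [Submodule.mem_sup] at hmem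
  obtain ⟨d, hd, s, hs, heq⟩ := hmem
  obtain ⟨a, rfl⟩ := Submodule.mem_span_singleton.mp hs
  have h2 : -v = J d + a • (d + a • v) := by
    calc -v = J (J v) := (hJ v).symm
    _ = J (d + a • v) := congrArg J heq.symm
    _ = J d + a • J v := by rw [map_add, map_smul]
    _ = J d + a • (d + a • v) := by rw [← heq]
  have h3 : (1 + a * a) • v = -(J d + a • d) := by
    linear_combination (norm := module) -h2
  have hne : (1 + a * a) ≠ 0 := by nlinarith [sq_nonneg a]
  have : v ∈ D := by
    have hmemD : -(J d + a • d) ∈ D := D.neg_mem (D.add_mem (hD d hd) (D.smul_mem a hd))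
    have := D.smul_mem (1 + a * a)⁻¹ (h3 ▸ hmemD)
    rwa [smul_smul, inv_mul_cancel₀ hne, one_smul] at this
  exact hv this

lemma J_step (J : V →ₗ[ℝ] V) (hJ : ∀ v, J (J v) = -v)
    (D : Submodule ℝ V) (hD : ∀ x ∈ D, J x ∈ D) {v : V} (hv : v ∉ D) :
    (∀ x ∈ D ⊔ span ℝ {v, J v}, J x ∈ D ⊔ span ℝ {v, J v}) ∧
    finrank ℝ (D ⊔ span ℝ {v, J v} : Submodule ℝ V) = finrank ℝ D + 2 := by
  have hJv : J v ∉ D ⊔ span ℝ {v} := J_not_mem_aux J hJ D hD hv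
  have hsplit : D ⊔ span ℝ {v, J v} = (D ⊔ span ℝ {v}) ⊔ span ℝ {J v} := by
    rw [Submodule.span_insert]
    exact (sup_assoc _ _ _).symm
  constructor
  · intro x hx
    have hle : D ⊔ span ℝ {v, J v} ≤ Submodule.comap J (D ⊔ span ℝ {v, J v}) := by
      refine sup_le (fun y hy => ?_) ?_
      · exact Submodule.mem_comap.mpr (le_sup_left (α := Submodule ℝ V) (hD y hy))
      · rw [Submodule.span_le]
        rintro y (rfl | hy)
        · refine Submodule.mem_comap.mpr (le_sup_right (α := Submodule ℝ V) ?_)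
          exact subset_span (by simp)
        · simp only [Set.mem_singleton_iff] at hy
          subst hy
          refine Submodule.mem_comap.mpr ?_
          rw [hJ v]
          refine Submodule.neg_mem _ (le_sup_right (α := Submodule ℝ V) ?_)
          exact subset_span (by simp)
    exact hle hx
  · rw [hsplit, finrank_sup_span_singleton _ hJv, finrank_sup_span_singleton _ hv]

lemma cons_span_step (J : V →ₗ[ℝ] V) (D : Submodule ℝ V) (v : V) {k : ℕ} (f : Fin k → V) :
    D ⊔ span ℝ (Set.range (Fin.cons v f : Fin (k+1) → V)
        ∪ J '' Set.range (Fin.cons v f : Fin (k+1) → V)) =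
      (D ⊔ span ℝ {v, J v}) ⊔ span ℝ (Set.range f ∪ J '' Set.range f) := by
  rw [Fin.range_cons, Set.image_insert_eq]
  have hsets : insert v (Set.range f) ∪ insert (J v) (J '' Set.range f)
      = ({v, J v} : Set V) ∪ (Set.range f ∪ J '' Set.range f) := by
    ext x
    simp only [Set.mem_insert_iff, Set.mem_union, Set.mem_singleton_iff]
    tauto
  rw [hsets, Submodule.span_union, ← sup_assoc]

lemma exists_J_family (J : V →ₗ[ℝ] V) (hJ : ∀ v, J (J v) = -v) :
    ∀ c : ℕ, ∀ D : Submodule ℝ V, (∀ x ∈ D, J x ∈ D) →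
      finrank ℝ V = finrank ℝ D + c →
      ∃ k, c = 2 * k ∧ ∃ f : Fin k → V,
        D ⊔ span ℝ (Set.range f ∪ J '' Set.range f) = ⊤ := by
  intro c
  induction c using Nat.strong_induction_on with
  | _ c ih =>
    intro D hD hrk
    rcases Nat.eq_zero_or_pos c with rfl | hc
    · refine ⟨0, rfl, fun i => 0, ?_⟩
      have : D = ⊤ := Submodule.eq_top_of_finrank_eq (by omega)
      simp [Set.range_eq_empty, this]
    · have hDne : D ≠ ⊤ := by
        intro h
        rw [h, finrank_top] at hrk
        omega
      obtain ⟨v, hv⟩ : ∃ v, v ∉ D := by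
        by_contra h
        push_neg at h
        exact hDne (eq_top_iff.mpr fun x _ => h x)
      obtain ⟨hD'inv, hrk'⟩ := J_step J hJ D hD hv
      have hcge : 2 ≤ c := by
        have hle : finrank ℝ (D ⊔ span ℝ {v, J v} : Submodule ℝ V) ≤ finrank ℝ V :=
          Submodule.finrank_le _
        omega
      obtain ⟨k, hk, f, hf⟩ := ih (c - 2) (by omega) _ hD'inv (by omega)
      refine ⟨k + 1, by omega, Fin.cons v f, ?_⟩
      rw [cons_span_step]
      exact hf

end Aux

/-- For a symmetric bilinear `φ : V × V → W^{p,p}` with `Tφ(X,Y) = φ(X,JY)`,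
one has `4 dim S(φ) ≤ κ(φ)(κ(φ)+2)`. -/
theorem stmt_9 {V U : Type*}
    [AddCommGroup V] [Module ℝ V] [FiniteDimensional ℝ V]
    [NormedAddCommGroup U] [InnerProductSpace ℝ U] [FiniteDimensional ℝ U]
    (n : ℕ) (hdim : finrank ℝ V = 2 * n)
    (J : V →ₗ[ℝ] V) (hJ : ∀ v, J (J v) = -v)
    (φ : V →ₗ[ℝ] V →ₗ[ℝ] (U × U))
    (hsymm : ∀ X Y : V, φ X Y = φ Y X)
    (hT : ∀ X Y : V, Tmap U (φ X Y) = φ X (J Y)) :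
    4 * finrank ℝ (span ℝ {w : U × U | ∃ X Y, w = φ X Y}) ≤
      (sSup (Set.range fun X : V => finrank ℝ (LinearMap.range (φ X)))) *
      (sSup (Set.range fun X : V => finrank ℝ (LinearMap.range (φ X))) + 2) := by
  classical
  by_cases hφ0 : φ = 0
  · have hset : {w : U × U | ∃ X Y, w = φ X Y} = {0} := by
      ext w
      constructor
      · rintro ⟨X, Y, rfl⟩; simp [hφ0]
      · rintro rfl; exact ⟨0, 0, by simp⟩
    rw [hset, Submodule.span_zero_singleton, finrank_bot]
    simp
  set κ := sSup (Set.range fun X : V => finrank ℝ (LinearMap.range (φ X))) with hκdef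
  have hbdd : BddAbove (Set.range fun X : V => finrank ℝ (LinearMap.range (φ X))) :=
    ⟨finrank ℝ (U × U), by rintro _ ⟨X, rfl⟩; exact Submodule.finrank_le _⟩
  obtain ⟨X0, hX0⟩ : ∃ X0, finrank ℝ (LinearMap.range (φ X0)) = κ :=
    Nat.sSup_mem ⟨_, Set.mem_range_self 0⟩ hbdd
  have hmax : ∀ X, finrank ℝ (LinearMap.range (φ X)) ≤ κ :=
    fun X => le_csSup hbdd (Set.mem_range_self X)
  -- polarization : some q(Y) ≠ 0
  obtain ⟨Y, hY⟩ : ∃ Y, φ Y Y ≠ 0 := by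
    by_contra h
    push_neg at h
    apply hφ0
    apply LinearMap.ext; intro A
    apply LinearMap.ext; intro B
    show φ A B = 0
    have h2 := h (A + B)
    simp only [map_add, LinearMap.add_apply] at h2
    rw [h A, h B, hsymm B A] at h2
    have h3 : (2 : ℝ) • φ A B = 0 := by
      rw [two_smul]
      calc φ A B + φ A B = 0 + φ A B + (φ A B + 0) - 0 := by abel
      _ = 0 := by rw [h2]; abel
    have h4 := congrArg (fun x => (2:ℝ)⁻¹ • x) h3
    simpa [smul_smul] using h4
  -- a functional not vanishing on φ Y Y
  obtain ⟨g, hgY⟩ : ∃ g : (U × U) →ₗ[ℝ] ℝ, g (φ Y Y) ≠ 0 := by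
    by_cases h1 : (φ Y Y).1 = 0
    · have h2 : (φ Y Y).2 ≠ 0 := by
        intro h2; exact hY (Prod.ext h1 h2)
      refine ⟨((innerSL ℝ (φ Y Y).2).toLinearMap).comp (LinearMap.snd ℝ U U), ?_⟩
      simpa using h2
    · refine ⟨((innerSL ℝ (φ Y Y).1).toLinearMap).comp (LinearMap.fst ℝ U U), ?_⟩
      simpa using h1
  -- find a regular X1 with φ X1 X1 ≠ 0
  obtain ⟨v0, hli0, hsp0⟩ := exists_preimage_basis (φ X0)
  have hbad1 := finite_bad_perturb (fun j => φ X0 (v0 j)) (fun j => φ Y (v0 j)) hli0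
  set p2 : Polynomial ℝ :=
    C (g (φ X0 X0)) + C (g (φ X0 Y) + g (φ Y X0)) * X + C (g (φ Y Y)) * X ^ 2 with hp2
  have hp2ne : p2 ≠ 0 := by
    intro h
    have := congrArg (fun q => coeff q 2) h
    simp [hp2, coeff_add, coeff_C, coeff_C_mul, coeff_X_pow] at this
    exact hgY this
  obtain ⟨t, ht⟩ := ((hbad1.union (Polynomial.finite_setOf_isRoot hp2ne)).infinite_compl).nonempty
  simp only [Set.mem_compl_iff, Set.mem_union, not_or, Set.mem_setOf_eq, not_not] at ht
  obtain ⟨hli1, hroot⟩ := ht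
  set X1 := X0 + t • Y with hX1
  have happ : ∀ j, φ X0 (v0 j) + t • φ Y (v0 j) = φ X1 (v0 j) := by
    intro j; simp [hX1, map_add, map_smul]
  have hX1reg : finrank ℝ (LinearMap.range (φ X1)) = κ := by
    refine le_antisymm (hmax X1) ?_
    have hle : span ℝ (Set.range fun j => φ X0 (v0 j) + t • φ Y (v0 j)) ≤
        LinearMap.range (φ X1) := by
      rw [span_le]
      rintro x ⟨j, rfl⟩
      show φ X0 (v0 j) + t • φ Y (v0 j) ∈ (LinearMap.range (φ X1) : Set (U × U))
      rw [happ j]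
      exact LinearMap.mem_range_self _ _
    have := Submodule.finrank_mono hle
    rwa [finrank_span_eq_card hli1, Fintype.card_fin, hX0] at this
  have hX1ne : φ X1 X1 ≠ 0 := by
    intro h
    apply hroot
    have hexp : φ X1 X1 = φ X0 X0 + t • φ X0 Y + t • φ Y X0 + (t * t) • φ Y Y := by
      simp only [hX1, map_add, map_smul, LinearMap.add_apply, LinearMap.smul_apply,
        smul_smul, smul_add]
      abel
    show p2.IsRoot t
    have : p2.eval t = g (φ X1 X1) := by
      rw [hexp]
      simp only [hp2, eval_add, eval_mul, eval_C, eval_X, eval_pow, map_add, map_smul,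
        smul_eq_mul]
      ring
    rw [IsRoot, this, h, map_zero]
  clear hli1 hroot happ hbad1 hp2ne hli0 hsp0 hY hgY
  -- set up kernel and complement
  set N := LinearMap.ker (φ X1) with hN
  have hNJ : ∀ x ∈ N, J x ∈ N := by
    intro x hx
    rw [hN, LinearMap.mem_ker] at hx ⊢
    rw [← hT X1 x, hx, map_zero]
  have hX1N : X1 ∉ N := by
    intro h
    rw [hN, LinearMap.mem_ker] at h
    exact hX1ne h
  obtain ⟨hD0J, hD0rk⟩ := J_step J hJ N hNJ hX1N
  have hD0le : finrank ℝ (N ⊔ span ℝ {X1, J X1} : Submodule ℝ V) ≤ finrank ℝ V :=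
    Submodule.finrank_le _
  obtain ⟨k, hk, f, hf⟩ := exists_J_family J hJ
    (finrank ℝ V - finrank ℝ (N ⊔ span ℝ {X1, J X1} : Submodule ℝ V))
    (N ⊔ span ℝ {X1, J X1}) hD0J (by omega)
  set m := k + 1 with hm
  set e : Fin m → V := Fin.cons X1 f with he
  have hetop : N ⊔ span ℝ (Set.range e ∪ J '' Set.range e) = ⊤ := by
    rw [he, cons_span_step]
    exact hf
  -- rank-nullity : κ = 2 * m
  have hrn : finrank ℝ (LinearMap.range (φ X1)) + finrank ℝ N = finrank ℝ V :=
    LinearMap.finrank_range_add_finrank_ker (φ X1)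
  have hκ2m : κ = 2 * m := by
    have h1 : finrank ℝ V = finrank ℝ (N ⊔ span ℝ {X1, J X1} : Submodule ℝ V) +
        (finrank ℝ V - finrank ℝ (N ⊔ span ℝ {X1, J X1} : Submodule ℝ V)) := by omega
    rw [hX1reg] at hrn
    omega
  -- the spanning submodule G
  set gfun : ({p : Fin m × Fin m // p.1 ≤ p.2} × Bool) → U × U := fun x =>
    if x.2 = true then φ (e x.1.1.1) (e x.1.1.2) else Tmap U (φ (e x.1.1.1) (e x.1.1.2))
    with hgfun
  set G := span ℝ (Set.range gfun) with hG
  have hgen1 : ∀ i j : Fin m, φ (e i) (e j) ∈ G := by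
    intro i j
    rcases le_total i j with h | h
    · apply subset_span
      exact ⟨⟨⟨(i, j), h⟩, true⟩, by simp [hgfun]⟩
    · rw [hsymm]
      apply subset_span
      exact ⟨⟨⟨(j, i), h⟩, true⟩, by simp [hgfun]⟩
  have hgen2 : ∀ i j : Fin m, Tmap U (φ (e i) (e j)) ∈ G := by
    intro i j
    rcases le_total i j with h | h
    · apply subset_span
      exact ⟨⟨⟨(i, j), h⟩, false⟩, by simp [hgfun]⟩
    · rw [hsymm]
      apply subset_span
      exact ⟨⟨⟨(j, i), h⟩, false⟩, by simp [hgfun]⟩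
  have hTT : ∀ w : U × U, Tmap U (Tmap U w) = -w := by
    intro w
    simp [Tmap, LinearMap.prod_apply, Prod.ext_iff]
  -- the spanning set of V
  set Sp : Set V := (N : Set V) ∪ (Set.range e ∪ J '' Set.range e) with hSp
  have hSptop : span ℝ Sp = ⊤ := by
    rw [hSp, Submodule.span_union, Submodule.span_eq]
    exact hetop
  have he0 : e 0 = X1 := by rw [he]; rfl
  -- range of φ X1 is inside G
  have hMG : ∀ Z, φ X1 Z ∈ G := by
    intro Z
    have hZ : Z ∈ span ℝ Sp := by rw [hSptop]; exact mem_top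
    induction hZ using Submodule.span_induction with
    | mem x hx =>
      rcases hx with hx | ⟨j, rfl⟩ | ⟨y, ⟨j, rfl⟩, rfl⟩
      · have : φ X1 x = 0 := hx
        rw [this]; exact G.zero_mem
      · rw [← he0]; exact hgen1 0 j
      · rw [← hT X1 (e j), ← he0]; exact hgen2 0 j
    | zero => rw [map_zero]; exact G.zero_mem
    | add x y hx hy ihx ihy => rw [map_add]; exact G.add_mem ihx ihy
    | smul a x hx ihx => rw [map_smul]; exact G.smul_mem a ihx
  have hNG : ∀ Z ∈ N, ∀ Y' : V, φ Y' Z ∈ G := by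
    intro Z hZ Y'
    have hmem := lemA φ X1 hmax hX1reg Y' Z hZ
    obtain ⟨Z', hZ'⟩ := hmem
    rw [← hZ']
    exact hMG Z'
  -- the main claim
  have hclaim : ∀ A B : V, φ A B ∈ G := by
    have key : ∀ A, A ∈ span ℝ Sp → ∀ B, φ A B ∈ G := by
      intro A hA
      induction hA using Submodule.span_induction with
      | mem x hx =>
        intro B
        have hB : B ∈ span ℝ Sp := by rw [hSptop]; exact mem_top
        rcases hx with hxN | ⟨i, rfl⟩ | ⟨y, ⟨i, rfl⟩, rfl⟩
        · rw [hsymm]; exact hNG x hxN B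
        · induction hB using Submodule.span_induction with
          | mem y hy =>
            rcases hy with hyN | ⟨j, rfl⟩ | ⟨z, ⟨j, rfl⟩, rfl⟩
            · exact hNG y hyN (e i)
            · exact hgen1 i j
            · rw [← hT (e i) (e j)]; exact hgen2 i j
          | zero => rw [map_zero]; exact G.zero_mem
          | add y z hy hz ihy ihz => rw [map_add]; exact G.add_mem ihy ihz
          | smul a y hy ihy => rw [map_smul]; exact G.smul_mem a ihy
        · induction hB using Submodule.span_induction with
          | mem y hy =>
            rcases hy with hyN | ⟨j, rfl⟩ | ⟨z, ⟨j, rfl⟩, rfl⟩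
            · exact hNG y hyN (J (e i))
            · rw [hsymm (J (e i)) (e j), ← hT (e j) (e i)]; exact hgen2 j i
            · have h1 : φ (J (e i)) (J (e j)) = Tmap U (φ (J (e i)) (e j)) :=
                (hT (J (e i)) (e j)).symm
              have h2 : φ (J (e i)) (e j) = Tmap U (φ (e i) (e j)) := by
                rw [hsymm (J (e i)) (e j), ← hT (e j) (e i), hsymm (e j) (e i)]
              rw [h1, h2, hTT]
              exact G.neg_mem (hgen1 i j)
          | zero => rw [map_zero]; exact G.zero_mem
          | add y z hy hz ihy ihz => rw [map_add]; exact G.add_mem ihy ihz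
          | smul a y hy ihy => rw [map_smul]; exact G.smul_mem a ihy
      | zero => intro B; rw [map_zero]; exact G.zero_mem
      | add x y hx hy ihx ihy =>
        intro B; rw [map_add]; exact G.add_mem (ihx B) (ihy B)
      | smul a x hx ihx =>
        intro B; rw [map_smul]; exact G.smul_mem a (ihx B)
    intro A B
    exact key A (by rw [hSptop]; exact mem_top) B
  -- conclude
  have hSG : span ℝ {w : U × U | ∃ X Y, w = φ X Y} ≤ G := by
    rw [span_le]
    rintro w ⟨A, B, rfl⟩
    exact hclaim A B
  have h1 : finrank ℝ (span ℝ {w : U × U | ∃ X Y, w = φ X Y}) ≤ finrank ℝ G :=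
    Submodule.finrank_mono hSG
  have h2 : finrank ℝ G ≤ Fintype.card ({p : Fin m × Fin m // p.1 ≤ p.2} × Bool) :=
    finrank_range_le_card gfun
  have h3 : Fintype.card ({p : Fin m × Fin m // p.1 ≤ p.2} × Bool) =
      Fintype.card {p : Fin m × Fin m // p.1 ≤ p.2} * 2 := by
    simp [Fintype.card_prod]
  have h4 := two_mul_card_le_pairs m
  have h5 : κ * (κ + 2) = 4 * (m * (m + 1)) := by rw [hκ2m]; ring
  rw [h5]
  omega
end

section
/- If γ(X,Y) = (α(X,Y),α(X,JY)) is flat with respect to the signature (p,p) inner product on W^{p,p}, then θ(X,Y) = γ(X,Y) − γ(JX,JY) is also flat. -/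
open Module Submodule
open scoped RealInnerProductSpace

/-- The signature `(p,p)` inner product on `W = U ⊕ U`. -/
noncomputable def Bl (U : Type*) [NormedAddCommGroup U] [InnerProductSpace ℝ U] :
    (U × U) →ₗ[ℝ] (U × U) →ₗ[ℝ] ℝ :=
  LinearMap.mk₂ ℝ (fun x y => ⟪x.1, y.1⟫ - ⟪x.2, y.2⟫)
    (by intro x x' y; simp [inner_add_left]; ring)
    (by intro c x y; simp [real_inner_smul_left]; ring)
    (by intro x y y'; simp [inner_add_right]; ring)
    (by intro c x y; simp [real_inner_smul_right]; ring)

/-- If `γ(X,Y) = (α(X,Y),α(X,JY))` is flat, then `θ(X,Y) = γ(X,Y) − γ(JX,JY)`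
is also flat. -/
theorem stmt_14 {V U : Type*}
    [AddCommGroup V] [Module ℝ V]
    [NormedAddCommGroup U] [InnerProductSpace ℝ U]
    (J : V →ₗ[ℝ] V) (hJ : ∀ v, J (J v) = -v)
    (α : V →ₗ[ℝ] V →ₗ[ℝ] U)
    (hsymm : ∀ X Y : V, α X Y = α Y X)
    (γ θ : V → V → U × U)
    (hγ : ∀ X Y : V, γ X Y = (α X Y, α X (J Y)))
    (hθ : ∀ X Y : V, θ X Y = γ X Y - γ (J X) (J Y))
    (hγflat : ∀ X Z Y T : V, Bl U (γ X Y) (γ Z T) = Bl U (γ X T) (γ Z Y)) :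
    ∀ X Z Y T : V, Bl U (θ X Y) (θ Z T) = Bl U (θ X T) (θ Z Y) := by
  intro X Z Y T
  have h1 := hγflat X Z Y T
  have h2 := hγflat (J X) (J Z) (J Y) (J T)
  have h3 := hγflat X (J Z) Y (J T)
  have h4 := hγflat (J X) Z (J Y) T
  simp only [hθ, hγ, Bl, hJ, map_neg, LinearMap.neg_apply, inner_neg_left,
    inner_neg_right, LinearMap.mk₂_apply, Prod.fst_sub, Prod.snd_sub,
    inner_sub_left, inner_sub_right] at h1 h2 h3 h4 ⊢
  linear_combination h1 - h3 - h4 + h2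
end

section
/- Let β(X,Y) = (α(X,Y)+α(JX,JY), α(X,JY)−α(JX,Y)) and suppose the flatness-compatibility ⟪β(X,Y),γ(Z,T)⟫ = ⟪β(X,T),γ(Z,Y)⟫ holds. If U₁ = span{π₁(β(X,Y)) : X,Y ∈ V} ⊆ U^p, then S(β) = U₁ ⊕ U₁, and N(β) equals the nullity of the U₁-component of γ, i.e., N(β) = N(γ_{U₁}) where γ_{U₁} = (π_{U₁}α(X,Y), π_{U₁}α(X,JY)). -/
open Module Submodule
open scoped RealInnerProductSpace

/-- If `β(X,Y) = γ(X,Y)+γ(JX,JY)` satisfies the compatibility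
`⟪β(X,Y),γ(Z,T)⟫ = ⟪β(X,T),γ(Z,Y)⟫` and `U₁ = span π₁(S(β))`, then
`S(β) = U₁ ⊕ U₁` and `N(β) = N(γ_{U₁})`, where `Y ∈ N(γ_{U₁})` means that the
`U₁`-components of `α(X,Y)` and `α(X,JY)` vanish for every `X`. -/
theorem stmt_15 {V U : Type*}
    [AddCommGroup V] [Module ℝ V]
    [NormedAddCommGroup U] [InnerProductSpace ℝ U]
    (J : V →ₗ[ℝ] V) (hJ : ∀ v, J (J v) = -v)
    (α : V →ₗ[ℝ] V →ₗ[ℝ] U)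
    (hsymm : ∀ X Y : V, α X Y = α Y X)
    (γ β : V → V → U × U)
    (hγ : ∀ X Y : V, γ X Y = (α X Y, α X (J Y)))
    (hβ : ∀ X Y : V, β X Y = γ X Y + γ (J X) (J Y))
    (hcompat : ∀ X Z Y T : V, Bl U (β X Y) (γ Z T) = Bl U (β X T) (γ Z Y))
    (U₁ : Submodule ℝ U)
    (hU₁ : U₁ = span ℝ {u : U | ∃ X Y : V, u = (β X Y).1}) :
    span ℝ {w : U × U | ∃ X Y : V, w = β X Y} = U₁.prod U₁ ∧
    (∀ Y : V, (∀ X : V, β X Y = 0) ↔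
      (∀ X : V, ∀ u ∈ U₁, ⟪α X Y, u⟫ = 0 ∧ ⟪α X (J Y), u⟫ = 0)) := by
  have hb1 : ∀ X Y : V, (β X Y).1 = α X Y + α (J X) (J Y) := by
    intro X Y; simp [hβ, hγ]
  have hb2 : ∀ X Y : V, (β X Y).2 = α X (J Y) - α (J X) Y := by
    intro X Y; simp [hβ, hγ, hJ, sub_eq_add_neg]
  have hswap : ∀ X Y : V, β X (J Y) = ((β X Y).2, -(β X Y).1) := by
    intro X Y
    ext
    · simp [hb1, hb2, hJ, sub_eq_add_neg]
    · simp [hb1, hb2, hJ]; abel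
  have hsy : ∀ X Y : V, β Y X = ((β X Y).1, -(β X Y).2) := by
    intro X Y
    ext
    · simp only [hb1]; rw [hsymm X Y, hsymm (J X) (J Y)]
    · simp only [hb2]; rw [hsymm Y (J X), hsymm (J Y) X]; abel
  have hmemU₁ : ∀ X Y : V, (β X Y).1 ∈ U₁ := by
    intro X Y; rw [hU₁]; exact subset_span ⟨X, Y, rfl⟩
  set S : Set (U × U) := {w : U × U | ∃ X Y : V, w = β X Y} with hS
  -- every (u,0) and (0,u) with u ∈ U₁ lies in span S
  have hfst : ∀ u ∈ U₁, ((u, 0) : U × U) ∈ span ℝ S := by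
    intro u hu
    rw [hU₁] at hu
    induction hu using span_induction with
    | mem x hx =>
        obtain ⟨X, Y, rfl⟩ := hx
        have : ((β X Y).1, (0:U)) = (2⁻¹ : ℝ) • (β X Y + β Y X) := by
          rw [hsy]; ext <;> simp <;> module
        rw [this]
        exact smul_mem _ _ (add_mem (subset_span ⟨X, Y, rfl⟩) (subset_span ⟨Y, X, rfl⟩))
    | zero => exact zero_mem _
    | add x y hx hy ihx ihy =>
        have : ((x + y, 0) : U × U) = (x, 0) + (y, 0) := by simp
        rw [this]; exact add_mem ihx ihy
    | smul a x hx ihx =>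
        have : ((a • x, 0) : U × U) = a • ((x, 0) : U × U) := by simp
        rw [this]; exact smul_mem _ _ ihx
  have hsnd : ∀ u ∈ U₁, ((0, u) : U × U) ∈ span ℝ S := by
    intro u hu
    rw [hU₁] at hu
    induction hu using span_induction with
    | mem x hx =>
        obtain ⟨X, Y, rfl⟩ := hx
        -- β X (J Y) = (b, -a); so (0, (β X Y).1) = ((β X Y).2, 0) - β X (J Y)
        have hm2 : (β X Y).2 ∈ U₁ := by
          have : (β X Y).2 = (β X (J Y)).1 := by rw [hswap]
          rw [this]; exact hmemU₁ X (J Y)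
        have h2 : (((β X Y).2, 0) : U × U) ∈ span ℝ S := hfst _ hm2
        have heq : ((0, (β X Y).1) : U × U) = ((β X Y).2, 0) - β X (J Y) := by
          rw [hswap]; ext <;> simp
        rw [heq]
        exact sub_mem h2 (subset_span ⟨X, J Y, rfl⟩)
    | zero => exact zero_mem _
    | add x y hx hy ihx ihy =>
        have : ((0, x + y) : U × U) = (0, x) + (0, y) := by simp
        rw [this]; exact add_mem ihx ihy
    | smul a x hx ihx =>
        have : ((0, a • x) : U × U) = a • ((0, x) : U × U) := by simp
        rw [this]; exact smul_mem _ _ ihx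
  constructor
  · apply le_antisymm
    · rw [span_le]
      rintro w ⟨X, Y, rfl⟩
      refine ⟨hmemU₁ X Y, ?_⟩
      have : (β X Y).2 = (β X (J Y)).1 := by rw [hswap]
      rw [this]; exact hmemU₁ X (J Y)
    · rintro ⟨u, v⟩ ⟨hu, hv⟩
      have : ((u, v) : U × U) = (u, 0) + (0, v) := by simp
      rw [this]
      exact add_mem (hfst u hu) (hsnd v hv)
  · intro Y
    constructor
    · intro h X u hu
      -- key: inner products with generators vanish
      have e1 : ∀ X' T Z : V, ⟪(β X' T).1, α Z Y⟫ - ⟪(β X' T).2, α Z (J Y)⟫ = 0 := by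
        intro X' T Z
        have := hcompat X' Z Y T
        rw [h X'] at this
        simp only [map_zero, LinearMap.zero_apply] at this
        have h' := this.symm
        rw [hγ] at h'
        simp only [Bl, LinearMap.mk₂_apply] at h'
        linarith
      have hJY : ∀ X' : V, β X' (J Y) = 0 := by
        intro X'; rw [hswap, h X']; simp
      have e2 : ∀ X' T Z : V, ⟪(β X' T).1, α Z (J Y)⟫ + ⟪(β X' T).2, α Z Y⟫ = 0 := by
        intro X' T Z
        have := hcompat X' Z (J Y) T
        rw [hJY X'] at this
        simp only [map_zero, LinearMap.zero_apply] at this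
        have h' : Bl U (β X' T) (γ Z (J Y)) = 0 := this.symm
        rw [hγ] at h'
        simp only [Bl, LinearMap.mk₂_apply, hJ] at h'
        rw [map_neg] at h'
        simp only [inner_neg_right] at h'
        linarith
      have key : ∀ X' T Z : V, ⟪(β X' T).1, α Z Y⟫ = 0 ∧ ⟪(β X' T).1, α Z (J Y)⟫ = 0 := by
        intro X' T Z
        have a1 := e1 X' T Z
        have a2 := e1 T X' Z
        rw [hsy X' T] at a2
        simp only [inner_neg_left] at a2
        have b1 := e2 X' T Z
        have b2 := e2 T X' Z
        rw [hsy X' T] at b2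
        simp only [inner_neg_left] at b2
        constructor <;> linarith
      rw [hU₁] at hu
      induction hu using span_induction with
      | mem x hx =>
          obtain ⟨X', T, rfl⟩ := hx
          have := key X' T X
          exact ⟨by rw [real_inner_comm]; exact this.1, by rw [real_inner_comm]; exact this.2⟩
      | zero => simp
      | add x y hx hy ihx ihy =>
          simp only [inner_add_right]
          exact ⟨by rw [ihx.1, ihy.1]; ring, by rw [ihx.2, ihy.2]; ring⟩
      | smul a x hx ihx =>
          simp only [real_inner_smul_right]
          exact ⟨by rw [ihx.1]; ring, by rw [ihx.2]; ring⟩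
    · intro h X
      have ha : (β X Y).1 = 0 := by
        have hm := hmemU₁ X Y
        have : ⟪(β X Y).1, (β X Y).1⟫ = 0 := by
          rw [hb1, inner_add_left]
          have h1 := (h X _ hm).1
          have h2 := (h (J X) _ hm).2
          rw [hb1] at h1 h2
          linarith
        exact inner_self_eq_zero.mp this
      have hb : (β X Y).2 = 0 := by
        have hm : (β X Y).2 ∈ U₁ := by
          have : (β X Y).2 = (β X (J Y)).1 := by rw [hswap]
          rw [this]; exact hmemU₁ X (J Y)
        have : ⟪(β X Y).2, (β X Y).2⟫ = 0 := by
          rw [hb2, inner_sub_left]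
          have h1 := (h X _ hm).2
          have h2 := (h (J X) _ hm).1
          rw [hb2] at h1 h2
          linarith
        exact inner_self_eq_zero.mp this
      exact Prod.ext ha hb
end

section
/- Let β : V^{2n} × V^{2n} → W^{p,p} with p ≤ n be a flat bilinear form of the type β(X,Y) = γ(X,Y) + γ(JX,JY) built from a symmetric α. Then ν(β) = 2n − κ(β), where ν(β) = dim N(β) and κ(β) is the maximal rank of the maps β_X. -/
open Module Submodule
open scoped RealInnerProductSpace

/-- If `β(X,Y) = γ(X,Y)+γ(JX,JY)` is flat and `p ≤ n`, then
`ν(β) = 2n − κ(β)`. -/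
theorem stmt_16 {V U : Type*}
    [AddCommGroup V] [Module ℝ V] [FiniteDimensional ℝ V]
    [NormedAddCommGroup U] [InnerProductSpace ℝ U] [FiniteDimensional ℝ U]
    (n p : ℕ) (hdimV : finrank ℝ V = 2 * n) (hdimU : finrank ℝ U = p)
    (hpn : p ≤ n)
    (J : V →ₗ[ℝ] V) (hJ : ∀ v, J (J v) = -v)
    (α : V →ₗ[ℝ] V →ₗ[ℝ] U)
    (hsymm : ∀ X Y : V, α X Y = α Y X)
    (β : V →ₗ[ℝ] V →ₗ[ℝ] (U × U))
    (hβ : ∀ X Y : V, β X Y =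
      (α X Y + α (J X) (J Y), α X (J Y) - α (J X) Y))
    (hβflat : ∀ X Z Y T : V, Bl U (β X Y) (β Z T) = Bl U (β X T) (β Z Y)) :
    finrank ℝ (↥(⨅ X : V, LinearMap.ker (β X))) =
      2 * n - sSup (Set.range fun X : V => finrank ℝ (LinearMap.range (β X))) := by
  classical
  have hBl : ∀ w v : U × U, Bl U w v = ⟪w.1, v.1⟫ - ⟪w.2, v.2⟫ := by
    intro w v; simp [Bl]
  have hs1 : ∀ X Y : V, (β Y X).1 = (β X Y).1 := by
    intro X Y; rw [hβ, hβ]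
    show α Y X + α (J Y) (J X) = α X Y + α (J X) (J Y)
    rw [hsymm Y X, hsymm (J Y) (J X)]
  have hs2 : ∀ X Y : V, (β Y X).2 = -(β X Y).2 := by
    intro X Y; rw [hβ, hβ]
    show α Y (J X) - α (J Y) X = -(α X (J Y) - α (J X) Y)
    rw [hsymm Y (J X), hsymm (J Y) X]; abel
  -- flatness with respect to the positive definite product, in swapped pattern
  have L2 : ∀ a b c d : V,
      ⟪(β a b).1, (β c d).1⟫ + ⟪(β a b).2, (β c d).2⟫ =
      ⟪(β a c).1, (β b d).1⟫ + ⟪(β a c).2, (β b d).2⟫ := by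
    intro a b c d
    have key := hβflat b c a d
    rw [hBl, hBl, hs1 a b, hs2 a b, hs1 a c, hs2 a c] at key
    simp only [inner_neg_left, inner_neg_right] at key
    linarith [key, real_inner_comm (β b d).1 (β a c).1,
      real_inner_comm (β b d).2 (β a c).2]
  -- the rank function
  set f : V → ℕ := fun X => finrank ℝ (LinearMap.range (β X)) with hf
  have hbdd : BddAbove (Set.range f) := by
    refine ⟨finrank ℝ (U × U), ?_⟩
    rintro _ ⟨X, rfl⟩
    exact Submodule.finrank_le _
  have hne : (Set.range f).Nonempty := ⟨f 0, ⟨0, rfl⟩⟩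
  obtain ⟨X0, hX0⟩ := Nat.sSup_mem hne hbdd
  have hmax : ∀ X, f X ≤ f X0 := fun X => hX0 ▸ le_csSup hbdd ⟨X, rfl⟩
  have hrn : ∀ X : V, f X + finrank ℝ (LinearMap.ker (β X)) = 2 * n := by
    intro X
    rw [← hdimV]
    exact LinearMap.finrank_range_add_finrank_ker (β X)
  -- main step: kernel of the regular element kills itself
  have hker0 : ∀ Y1, β X0 Y1 = 0 → ∀ T, β X0 T = 0 → β Y1 T = 0 := by
    intro Y1 hY1
    have hY1s : β Y1 X0 = 0 := by
      rw [Prod.ext_iff]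
      constructor
      · rw [hs1 X0 Y1, hY1]
      · rw [hs2 X0 Y1, hY1]; simp
    have horth : ∀ b d : V,
        ⟪(β Y1 b).1, (β X0 d).1⟫ + ⟪(β Y1 b).2, (β X0 d).2⟫ = 0 := by
      intro b d
      have h := L2 Y1 b X0 d
      rw [hY1s] at h
      simpa using h
    have hkereq : LinearMap.ker (β (X0 + Y1)) =
        LinearMap.ker (β X0) ⊓ LinearMap.ker (β Y1) := by
      ext T
      simp only [LinearMap.mem_ker, Submodule.mem_inf, map_add, LinearMap.add_apply]
      constructor
      · intro h
        have hsum := horth T T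
        have hneg : β Y1 T = -(β X0 T) := eq_neg_of_add_eq_zero_right h
        rw [hneg] at hsum
        simp only [Prod.fst_neg, Prod.snd_neg, inner_neg_left] at hsum
        have n1 : (0:ℝ) ≤ ⟪(β X0 T).1, (β X0 T).1⟫ := real_inner_self_nonneg
        have n2 : (0:ℝ) ≤ ⟪(β X0 T).2, (β X0 T).2⟫ := real_inner_self_nonneg
        have e1 : ⟪(β X0 T).1, (β X0 T).1⟫ = 0 := by linarith
        have e2 : ⟪(β X0 T).2, (β X0 T).2⟫ = 0 := by linarith
        have hx : β X0 T = 0 := by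
          rw [Prod.ext_iff]
          refine ⟨?_, ?_⟩
          · simpa using inner_self_eq_zero.mp e1
          · simpa using inner_self_eq_zero.mp e2
        exact ⟨hx, by rw [hneg, hx, neg_zero]⟩
      · rintro ⟨ha, hb⟩; rw [ha, hb, add_zero]
    intro T hT
    have hle : LinearMap.ker (β (X0 + Y1)) ≤ LinearMap.ker (β X0) := by
      rw [hkereq]; exact inf_le_left
    have hfr : finrank ℝ (LinearMap.ker (β X0)) ≤
        finrank ℝ (LinearMap.ker (β (X0 + Y1))) := by
      have a1 := hrn X0
      have a2 := hrn (X0 + Y1)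
      have a3 := hmax (X0 + Y1)
      omega
    have heq := Submodule.eq_of_le_of_finrank_le hle hfr
    have hsub : LinearMap.ker (β X0) ≤ LinearMap.ker (β Y1) := by
      rw [← heq, hkereq]; exact inf_le_right
    exact hsub hT
  -- every element of ker β_{X0} is in the total nullity
  have hN : ∀ Y, β X0 Y = 0 → ∀ X, β X Y = 0 := by
    intro Y hY X
    have hYY : β Y Y = 0 := hker0 Y hY Y hY
    have h := L2 X Y X Y
    rw [hYY] at h
    simp only [Prod.fst_zero, Prod.snd_zero, inner_zero_right] at h
    have n1 : (0:ℝ) ≤ ⟪(β X Y).1, (β X Y).1⟫ := real_inner_self_nonneg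
    have n2 : (0:ℝ) ≤ ⟪(β X Y).2, (β X Y).2⟫ := real_inner_self_nonneg
    have e1 : ⟪(β X Y).1, (β X Y).1⟫ = 0 := by linarith
    have e2 : ⟪(β X Y).2, (β X Y).2⟫ = 0 := by linarith
    rw [Prod.ext_iff]
    refine ⟨?_, ?_⟩
    · simpa using inner_self_eq_zero.mp e1
    · simpa using inner_self_eq_zero.mp e2
  have hinf : (⨅ X : V, LinearMap.ker (β X)) = LinearMap.ker (β X0) := by
    refine le_antisymm (iInf_le _ X0) (le_iInf fun X => ?_)
    intro Y hY
    exact LinearMap.mem_ker.mpr (hN Y (LinearMap.mem_ker.mp hY) X)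
  rw [hinf, ← hX0]
  have h1 := hrn X0
  omega
end

section
/- Let f : M^{2n} → R^{2n+p} be an isometric immersion of a Kaehler manifold with second fundamental form α at a point x₀. Then the bilinear form γ(X,Y) = (α(X,Y),α(X,JY)) valued in N₁ ⊕ N₁ with the signature inner product ⟪(ξ,ξ'),(η,η')⟫ = ⟨ξ,η⟩ − ⟨ξ',η'⟩ is flat; equivalently, ⟨α(X,T),α(Z,Y)⟩ − ⟨α(X,JT),α(Z,JY)⟩ = ⟨α(X,Y),α(Z,T)⟩ − ⟨α(X,JY),α(Z,JT)⟩ for all tangent vectors X,Y,Z,T at x₀. -/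
open Module Submodule
open scoped RealInnerProductSpace

/-- Algebraic form of the flatness of `γ(X,Y) = (α(X,Y),α(X,JY))` for the second
fundamental form of a Kaehler submanifold of Euclidean space: given a
curvature-like tensor `R` with `R(X,Y)JZ = JR(X,Y)Z` and the Gauss equation,
the stated flatness identity holds. -/
theorem stmt_18 {V U : Type*}
    [NormedAddCommGroup V] [InnerProductSpace ℝ V]
    [NormedAddCommGroup U] [InnerProductSpace ℝ U]
    (J : V →ₗ[ℝ] V) (hJ : ∀ v, J (J v) = -v)
    (hJiso : ∀ v w : V, ⟪J v, J w⟫ = ⟪v, w⟫)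
    (α : V →ₗ[ℝ] V →ₗ[ℝ] U)
    (hsymm : ∀ X Y : V, α X Y = α Y X)
    (R : V → V → V → V)
    (hGauss : ∀ X Z Y T : V,
      ⟪R X Z Y, T⟫ = ⟪α X T, α Z Y⟫ - ⟪α X Y, α Z T⟫)
    (hRJ : ∀ X Y Z : V, R X Y (J Z) = J (R X Y Z)) :
    ∀ X Y Z T : V,
      ⟪α X T, α Z Y⟫ - ⟪α X (J T), α Z (J Y)⟫ =
      ⟪α X Y, α Z T⟫ - ⟪α X (J Y), α Z (J T)⟫ := by
  intro X Y Z T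
  have h1 := hGauss X Z Y T
  have h2 := hGauss X Z (J Y) (J T)
  have h3 : ⟪R X Z (J Y), J T⟫ = ⟪R X Z Y, T⟫ := by rw [hRJ, hJiso]
  linarith
end

section
/- Let V be a real vector space with complex structure J and α : V × V → U symmetric bilinear. Suppose there is an isometric complex structure 𝒥 on a subspace Q ⊆ U such that the Q-component satisfies 𝒥α_Q(X,Y) = α_Q(X,JY) for all X,Y, and suppose α satisfies the Gauss equation for a curvature tensor K with K(X,JX) = ⟨α(X,X),α(JX,JX)⟩ − ‖α(X,JX)‖². Then for every X in the nullity of α_P (P the orthogonal complement of Q in the first normal space), K(X,JX) = −‖α_Q(X,X)‖² − ‖α_Q(X,JX)‖² ≤ 0. -/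
open Module Submodule
open scoped RealInnerProductSpace

/-- If the `Q`-component of `α` is pluriharmonic with respect to an isometric
complex structure `𝒥` of `Q`, and `K` satisfies the Gauss-equation formula for
holomorphic sectional-type curvature, then for any `X` in the nullity of the
`P = Q^⊥` component of `α` one has
`K(X,JX) = −‖α_Q(X,X)‖² − ‖α_Q(X,JX)‖² ≤ 0`. -/
theorem stmt_19 {V U : Type*}
    [AddCommGroup V] [Module ℝ V]
    [NormedAddCommGroup U] [InnerProductSpace ℝ U] [FiniteDimensional ℝ U]
    (J : V →ₗ[ℝ] V) (hJ : ∀ v, J (J v) = -v)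
    (α : V →ₗ[ℝ] V →ₗ[ℝ] U)
    (hsymm : ∀ X Y : V, α X Y = α Y X)
    (Q : Submodule ℝ U)
    (𝒥 : Q →ₗ[ℝ] Q) (h𝒥 : ∀ q : Q, 𝒥 (𝒥 q) = -q)
    (h𝒥iso : ∀ q q' : Q, ⟪(𝒥 q : U), (𝒥 q' : U)⟫ = ⟪(q : U), (q' : U)⟫)
    (hpluri : ∀ X Y : V,
      𝒥 (orthogonalProjection Q (α X Y)) = orthogonalProjection Q (α X (J Y)))
    (K : V → V → ℝ)
    (hK : ∀ X : V, K X (J X) = ⟪α X X, α (J X) (J X)⟫ - ‖α X (J X)‖ ^ 2)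
    (X : V)
    (hX : ∀ Y : V, orthogonalProjection Qᗮ (α Y X) = 0) :
    K X (J X) =
      -‖(orthogonalProjection Q (α X X) : Q)‖ ^ 2 -
        ‖(orthogonalProjection Q (α X (J X)) : Q)‖ ^ 2 ∧
    K X (J X) ≤ 0 := by
  have hmem : ∀ Y : V, α Y X ∈ Q := by
    intro Y
    have := orthogonalProjection_eq_zero_iff.mp (hX Y)
    rwa [Submodule.orthogonal_orthogonal] at this
  have hXX : ((orthogonalProjection Q (α X X) : Q) : U) = α X X :=
    Submodule.starProjection_eq_self_iff.mpr (hmem X)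
  have hXJX : ((orthogonalProjection Q (α X (J X)) : Q) : U) = α X (J X) := by
    rw [hsymm X (J X)]
    exact Submodule.starProjection_eq_self_iff.mpr (hmem (J X))
  -- pluriharmonicity: proj (α JX JX) = - proj (α X X)
  have hproj : (orthogonalProjection Q (α (J X) (J X)) : Q)
      = - orthogonalProjection Q (α X X) := by
    have h1 := hpluri (J X) X
    have h2 := hpluri X X
    rw [hsymm (J X) X, ← h2, h𝒥] at h1
    exact h1.symm
  have hinner : ⟪α X X, α (J X) (J X)⟫
      = -‖(orthogonalProjection Q (α X X) : Q)‖ ^ 2 := by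
    calc ⟪α X X, α (J X) (J X)⟫
        = ⟪((orthogonalProjection Q (α X X) : Q) : U), α (J X) (J X)⟫ := by rw [hXX]
      _ = ⟪α X X, ((orthogonalProjection Q (α (J X) (J X)) : Q) : U)⟫ :=
          Submodule.inner_starProjection_left_eq_right Q _ _
      _ = ⟪α X X, (-((orthogonalProjection Q (α X X) : Q)) : Q)⟫ := by rw [hproj]
      _ = -‖(orthogonalProjection Q (α X X) : Q)‖ ^ 2 := by
          rw [Submodule.coe_neg, inner_neg_right, hXX, real_inner_self_eq_norm_sq]
          have : ‖α X X‖ = ‖(orthogonalProjection Q (α X X) : Q)‖ := by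
            conv_lhs => rw [← hXX]
            exact (Submodule.coe_norm _).symm
          rw [this]
  have hnorm : ‖α X (J X)‖ = ‖(orthogonalProjection Q (α X (J X)) : Q)‖ := by
    conv_lhs => rw [← hXJX]
    exact (Submodule.coe_norm _).symm
  have hmain : K X (J X) =
      -‖(orthogonalProjection Q (α X X) : Q)‖ ^ 2 -
        ‖(orthogonalProjection Q (α X (J X)) : Q)‖ ^ 2 := by
    rw [hK X, hinner, hnorm]
  refine ⟨hmain, ?_⟩
  rw [hmain]
  have h1 : (0:ℝ) ≤ ‖(orthogonalProjection Q (α X X) : Q)‖ ^ 2 := by positivity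
  have h2 : (0:ℝ) ≤ ‖(orthogonalProjection Q (α X (J X)) : Q)‖ ^ 2 := by positivity
  linarith
end
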